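/- arXiv:2507.00093 — 5 statements merged into one kernel-verified Lean document; each statement's English description precedes it below -/
import Mathlib

section
/- Let H be a σ-MAG. If H contains a triple of the form a ∗→ b — c (an edge between a and b with an arrowhead at b, together with an undirected edge b — c), then a and c are adjacent in H, the edge between a and c is of the same type as the edge between a and b (i.e., a → c if a → b is in H, and a ↔ c if a ↔ b is in H), and the neighborhoods of b and of c are both complete. -/
/-- An edge mark: tail or arrowhead. -/
inductive Mark : Type
  | tail : Mark
  | arrow : Mark
  deriving DecidableEq

/-- A mixed graph, with directed edges (`dir a b` means `a → b`), bidirected edges and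
undirected edges. -/
structure MixedGraph (V : Type*) where
  dir : V → V → Prop
  bidir : V → V → Prop
  undir : V → V → Prop
  bidir_symm : ∀ a b, bidir a b → bidir b a
  undir_symm : ∀ a b, undir a b → undir b a

variable {V : Type*}

/-- There is an edge between `x` and `y` carrying mark `m₁` at `x` and mark `m₂` at `y`. -/
def MixedGraph.EdgeMk (G : MixedGraph V) (x y : V) : Mark → Mark → Prop
  | Mark.tail, Mark.arrow => G.dir x y
  | Mark.arrow, Mark.tail => G.dir y x
  | Mark.arrow, Mark.arrow => G.bidir x y
  | Mark.tail, Mark.tail => G.undir x y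

theorem MixedGraph.edgeMk_symm {G : MixedGraph V} {x y : V} {m₁ m₂ : Mark}
    (h : G.EdgeMk x y m₁ m₂) : G.EdgeMk y x m₂ m₁ := by
  cases m₁ <;> cases m₂ <;>
    first
      | exact h
      | exact G.bidir_symm _ _ h
      | exact G.undir_symm _ _ h

/-- `x` and `y` are adjacent: some edge joins them. -/
def MixedGraph.Adj (G : MixedGraph V) (x y : V) : Prop :=
  G.dir x y ∨ G.dir y x ∨ G.bidir x y ∨ G.undir x y

/-- There is an edge between `a` and `b` with an arrowhead at `a` (i.e. `a ←∗ b`). -/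
def MixedGraph.ArrowAt (G : MixedGraph V) (a b : V) : Prop :=
  G.dir b a ∨ G.bidir a b

/-- There is an edge between `a` and `b` with a tail at `a` (i.e. `a —∗ b`). -/
def MixedGraph.TailAt (G : MixedGraph V) (a b : V) : Prop :=
  G.dir a b ∨ G.undir a b

/-- A walk of length `n`: vertices `vert 0, …, vert n`; the `i`-th edge joins `vert i`
and `vert (i+1)`, carrying mark `mk1 i` at `vert i` and mark `mk2 i` at `vert (i+1)`. -/
structure MixedGraph.Walk (G : MixedGraph V) (n : ℕ) where
  vert : ℕ → V
  mk1 : ℕ → Mark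
  mk2 : ℕ → Mark
  valid : ∀ i < n, G.EdgeMk (vert i) (vert (i + 1)) (mk1 i) (mk2 i)

/-- A walk is a path if its vertices are pairwise distinct. -/
def MixedGraph.Walk.IsPath {G : MixedGraph V} {n : ℕ} (w : G.Walk n) : Prop :=
  ∀ i j, i ≤ n → j ≤ n → w.vert i = w.vert j → i = j

/-- Position `k` is a collider on the walk: both incident edges have an arrowhead
at `vert k`. -/
def MixedGraph.Walk.IsCollider {G : MixedGraph V} {n : ℕ} (w : G.Walk n) (k : ℕ) : Prop :=
  0 < k ∧ k < n ∧ w.mk2 (k - 1) = Mark.arrow ∧ w.mk1 k = Mark.arrow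

/-- `a` is an ancestor of `b`: there is a directed walk from `a` to `b`. -/
def MixedGraph.Anc (G : MixedGraph V) (a b : V) : Prop :=
  Relation.ReflTransGen G.dir a b

/-- `a` is an ancestor of some element of `A`. -/
def MixedGraph.AncS (G : MixedGraph V) (a : V) (A : Set V) : Prop :=
  ∃ b ∈ A, G.Anc a b

/-- `b` lies in the strongly connected component of `a`. -/
def MixedGraph.Sc (G : MixedGraph V) (a b : V) : Prop :=
  G.Anc a b ∧ G.Anc b a

/-- There is an anterior path from `a` to `b`: a path all of whose edges have a tail
mark at the endpoint nearer `a`. -/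
def MixedGraph.AnteriorPath (G : MixedGraph V) (a b : V) : Prop :=
  ∃ (n : ℕ) (w : G.Walk n), w.IsPath ∧ w.vert 0 = a ∧ w.vert n = b ∧
    ∀ i < n, w.mk1 i = Mark.tail

/-- The walk is inducing: every non-endpoint node is a collider that is an ancestor
of one of the endpoints. -/
def MixedGraph.Walk.IsInducing {G : MixedGraph V} {n : ℕ} (w : G.Walk n) : Prop :=
  ∀ k, 0 < k → k < n →
    w.IsCollider k ∧ (G.Anc (w.vert k) (w.vert 0) ∨ G.Anc (w.vert k) (w.vert n))

/-- There is an inducing path between `a` and `b`. -/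
def MixedGraph.InducingPath (G : MixedGraph V) (a b : V) : Prop :=
  ∃ (n : ℕ) (w : G.Walk n), w.IsPath ∧ w.vert 0 = a ∧ w.vert n = b ∧ w.IsInducing

/-- There is an inducing walk between `a` and `b`. -/
def MixedGraph.InducingWalk (G : MixedGraph V) (a b : V) : Prop :=
  ∃ (n : ℕ) (w : G.Walk n), w.vert 0 = a ∧ w.vert n = b ∧ w.IsInducing

/-- The neighborhood of `a` (its undirected-edge neighbors) is complete. -/
def MixedGraph.CompleteNbh (G : MixedGraph V) (a : V) : Prop :=
  ∀ b c, G.undir a b → G.undir a c → b ≠ c → G.undir b c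

/-- A σ-maximal ancestral graph (σ-MAG). -/
structure MixedGraph.IsSigmaMAG (G : MixedGraph V) : Prop where
  /-- no self-loops -/
  no_self : ∀ a : V, ¬ G.dir a a ∧ ¬ G.bidir a a ∧ ¬ G.undir a a
  /-- at most one edge between any two nodes -/
  at_most_one : ∀ a b : V,
    (G.dir a b → ¬ G.dir b a ∧ ¬ G.bidir a b ∧ ¬ G.undir a b) ∧
    (G.bidir a b → ¬ G.undir a b)
  /-- ancestral: an anterior path from `a` to `b` excludes an edge into `a` -/
  ancestral : ∀ a b : V, G.AnteriorPath a b → ¬ G.ArrowAt a b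
  /-- maximal: no inducing path between non-adjacent nodes -/
  maximal : ∀ a b : V, a ≠ b → ¬ G.Adj a b → ¬ G.InducingPath a b
  /-- σ-complete, part 1: `a ∗→ b — c` forces `a, c` adjacent -/
  sigma_complete₁ : ∀ a b c : V, G.ArrowAt b a → G.undir b c → G.Adj a c
  /-- σ-complete, part 2: `a ∗→ b — c` and `b — d` force `c, d` adjacent -/
  sigma_complete₂ : ∀ a b c d : V, G.ArrowAt b a → G.undir b c → G.undir b d →
    c ≠ d → G.Adj c d

/-- The walk is m-open given `Z`. -/
def MixedGraph.Walk.MOpen {G : MixedGraph V} {n : ℕ} (w : G.Walk n) (Z : Set V) : Prop :=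
  (∀ k ≤ n, ¬ w.IsCollider k → w.vert k ∉ Z) ∧
  (∀ k, w.IsCollider k → G.AncS (w.vert k) Z) ∧
  (∀ k, 0 < k → k < n →
    ¬ (w.mk2 (k - 1) = Mark.arrow ∧ w.mk1 k = Mark.tail ∧ w.mk2 k = Mark.tail) ∧
    ¬ (w.mk1 (k - 1) = Mark.tail ∧ w.mk2 (k - 1) = Mark.tail ∧ w.mk1 k = Mark.arrow))

/-- `X` is m-separated from `Y` given `Z`: every walk from `X` to `Y` is m-blocked. -/
def MixedGraph.MSep (G : MixedGraph V) (X Y Z : Set V) : Prop :=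
  ∀ (n : ℕ) (w : G.Walk n), w.vert 0 ∈ X → w.vert n ∈ Y → ¬ w.MOpen Z

/-- A directed mixed graph (DMG): no undirected edges and no self-loops. -/
def MixedGraph.IsDMG (G : MixedGraph V) : Prop :=
  (∀ a b : V, ¬ G.undir a b) ∧ ∀ a : V, ¬ G.dir a a ∧ ¬ G.bidir a a

/-- Position `k` is an unblockable non-collider on the walk (in a DMG). -/
def MixedGraph.Walk.Unblockable {G : MixedGraph V} {n : ℕ} (w : G.Walk n) (k : ℕ) : Prop :=
  0 < k ∧ k < n ∧
  ((w.mk1 (k - 1) = Mark.arrow ∧ w.mk2 (k - 1) = Mark.tail ∧ w.mk1 k = Mark.arrow ∧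
      G.Sc (w.vert k) (w.vert (k - 1))) ∨
   (w.mk2 (k - 1) = Mark.arrow ∧ w.mk1 k = Mark.tail ∧ w.mk2 k = Mark.arrow ∧
      G.Sc (w.vert k) (w.vert (k + 1))) ∨
   (w.mk1 (k - 1) = Mark.arrow ∧ w.mk2 (k - 1) = Mark.tail ∧
      w.mk1 k = Mark.tail ∧ w.mk2 k = Mark.arrow ∧
      G.Sc (w.vert k) (w.vert (k - 1)) ∧ G.Sc (w.vert k) (w.vert (k + 1))))

/-- The walk is σ-open given `W`. -/
def MixedGraph.Walk.SigmaOpen {G : MixedGraph V} {n : ℕ} (w : G.Walk n) (W : Set V) : Prop :=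
  (∀ k, w.IsCollider k → G.AncS (w.vert k) W) ∧
  (∀ k ≤ n, ¬ w.IsCollider k → ¬ w.Unblockable k → w.vert k ∉ W)

/-- `X` is σ-separated from `Y` given `W`: every walk from `X` to `Y` is σ-blocked. -/
def MixedGraph.SigmaSep (G : MixedGraph V) (X Y W : Set V) : Prop :=
  ∀ (n : ℕ) (w : G.Walk n), w.vert 0 ∈ X → w.vert n ∈ Y → ¬ w.SigmaOpen W

/-- The walk is σ-inducing given `S`: each collider is an ancestor of the endpoints or
of `S`, and each non-endpoint non-collider is unblockable. -/
def MixedGraph.Walk.IsSigmaInducing {G : MixedGraph V} {n : ℕ} (w : G.Walk n) (S : Set V) :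
    Prop :=
  (∀ k, w.IsCollider k → G.AncS (w.vert k) ({w.vert 0, w.vert n} ∪ S)) ∧
  (∀ k, 0 < k → k < n → ¬ w.IsCollider k → w.Unblockable k)

/-- There is a σ-inducing path given `S` between `a` and `b`. -/
def MixedGraph.SigmaInducingPath (G : MixedGraph V) (S : Set V) (a b : V) : Prop :=
  ∃ (n : ℕ) (w : G.Walk n), w.IsPath ∧ w.vert 0 = a ∧ w.vert n = b ∧ w.IsSigmaInducing S

/-- The mixed graph `H` (on node set `V`) represents the graph `G` (on node set
`V⁺ = V ∪ S`, where `V` is embedded via `ι` and `S = (Set.range ι)ᶜ` is the set of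
selection nodes) given `S`. -/
def Represents {V W : Type*} (H : MixedGraph V) (G : MixedGraph W) (ι : V → W) : Prop :=
  Function.Injective ι ∧
  (∀ a : V, ¬ H.dir a a ∧ ¬ H.bidir a a ∧ ¬ H.undir a a) ∧
  (∀ a b : V,
    (H.dir a b → ¬ H.dir b a ∧ ¬ H.bidir a b ∧ ¬ H.undir a b) ∧
    (H.bidir a b → ¬ H.undir a b)) ∧
  (∀ a b : V, a ≠ b → (H.Adj a b ↔ G.SigmaInducingPath (Set.range ι)ᶜ (ι a) (ι b))) ∧
  (∀ a b : V, H.ArrowAt a b → ¬ G.AncS (ι a) ({ι b} ∪ (Set.range ι)ᶜ)) ∧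
  (∀ a b : V, H.TailAt a b → G.AncS (ι a) ({ι b} ∪ (Set.range ι)ᶜ))

/-- The walk (of length `n ≥ 3`) is a discriminating path for its second-to-last node
`vert (n-1)`: the endpoints are non-adjacent, and every node strictly between `vert 0`
and `vert (n-1)` is a collider and a parent of `vert n`. -/
def MixedGraph.Walk.IsDiscriminating {G : MixedGraph V} {n : ℕ} (w : G.Walk n) : Prop :=
  3 ≤ n ∧ w.IsPath ∧ ¬ G.Adj (w.vert 0) (w.vert n) ∧
  ∀ k, 0 < k → k < n - 1 → w.IsCollider k ∧ G.dir (w.vert k) (w.vert n)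

/-- The subwalk starting at position `i`, of length `m`. -/
def MixedGraph.Walk.shift {G : MixedGraph V} {n : ℕ} (w : G.Walk n) (i m : ℕ)
    (h : i + m ≤ n) : G.Walk m where
  vert k := w.vert (i + k)
  mk1 k := w.mk1 (i + k)
  mk2 k := w.mk2 (i + k)
  valid k hk := by
    have hv := w.valid (i + k) (by omega)
    have he : i + (k + 1) = i + k + 1 := by omega
    show G.EdgeMk (w.vert (i + k)) (w.vert (i + (k + 1))) (w.mk1 (i + k)) (w.mk2 (i + k))
    rw [he]
    exact hv

/-- The reversed walk. -/
def MixedGraph.Walk.reverse {G : MixedGraph V} {n : ℕ} (w : G.Walk n) : G.Walk n where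
  vert k := w.vert (n - k)
  mk1 k := w.mk2 (n - 1 - k)
  mk2 k := w.mk1 (n - 1 - k)
  valid i hi := by
    have hv := w.valid (n - 1 - i) (by omega)
    have h1 : n - 1 - i + 1 = n - i := by omega
    have h2 : n - (i + 1) = n - 1 - i := by omega
    rw [h1] at hv
    show G.EdgeMk (w.vert (n - i)) (w.vert (n - (i + 1))) (w.mk2 (n - 1 - i)) (w.mk1 (n - 1 - i))
    rw [h2]
    exact MixedGraph.edgeMk_symm hv

/-- `(a, b, c)` is an unshielded collider in `G`. -/
def MixedGraph.UnshieldedCollider (G : MixedGraph V) (a b c : V) : Prop :=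
  a ≠ c ∧ ¬ G.Adj a c ∧ G.ArrowAt b a ∧ G.ArrowAt b c

/-- Condition 1 for two σ-MAGs on the same node set: same adjacencies, same unshielded
colliders, and agreement of the collider status of the discriminated node on
corresponding discriminating paths. -/
def Condition1 {V : Type*} (H₁ H₂ : MixedGraph V) : Prop :=
  (∀ a b, H₁.Adj a b ↔ H₂.Adj a b) ∧
  (∀ a b c, H₁.UnshieldedCollider a b c ↔ H₂.UnshieldedCollider a b c) ∧
  (∀ (n : ℕ) (w₁ : H₁.Walk n) (w₂ : H₂.Walk n),
    (∀ k, w₂.vert k = w₁.vert k) →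
    w₁.IsDiscriminating → w₂.IsDiscriminating →
    (w₁.IsCollider (n - 1) ↔ w₂.IsCollider (n - 1)))

/-- `H₁` and `H₂` are m-Markov equivalent. -/
def MMarkovEquiv {V : Type*} (H₁ H₂ : MixedGraph V) : Prop :=
  ∀ X Y Z : Set V, H₁.MSep X Y Z ↔ H₂.MSep X Y Z

/-- An anterior path of length 2 built from two edges with tails at the near end. -/
lemma anterior_two {G : MixedGraph V} {x y z : V} {m1 m2 : Mark}
    (h1 : G.EdgeMk x y Mark.tail m1) (h2 : G.EdgeMk y z Mark.tail m2)
    (hxy : x ≠ y) (hyz : y ≠ z) (hxz : x ≠ z) : G.AnteriorPath x z := by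
  refine ⟨2, ⟨fun i => if i = 0 then x else if i = 1 then y else z,
    fun _ => Mark.tail, fun i => if i = 0 then m1 else m2, ?_⟩, ?_, by simp, by simp,
    fun _ _ => rfl⟩
  · intro i hi
    interval_cases i
    · simpa using h1
    · simpa using h2
  · intro i j hi hj h
    interval_cases i <;> interval_cases j <;> simp_all

/-- Arrowhead inheritance across an undirected edge, key step. -/
lemma key_step {H : MixedGraph V} (hH : H.IsSigmaMAG) {a b c : V}
    (hab : H.dir a b ∨ H.bidir a b) (hbc : H.undir b c) :
    (H.dir a b → H.dir a c) ∧ (H.bidir a b → H.bidir a c) := by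
  obtain ⟨noself, amo, anc, _, sc1, sc2⟩ := hH
  have hab' : a ≠ b := by
    rintro rfl; rcases hab with h | h
    · exact (noself a).1 h
    · exact (noself a).2.1 h
  have hbc' : b ≠ c := fun h => (noself b).2.2 (h ▸ hbc)
  have hcb : H.undir c b := H.undir_symm _ _ hbc
  have hac' : a ≠ c := by
    rintro rfl
    rcases hab with h | h
    · exact ((amo a b).1 h).2.2 (H.undir_symm _ _ hbc)
    · exact ((amo a b).2 h) (H.undir_symm _ _ hbc)
  have harr : H.dir a b ∨ H.bidir b a := by
    rcases hab with h | h
    · exact Or.inl h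
    · exact Or.inr (H.bidir_symm _ _ h)
  -- rule out an edge c → a
  have hnca : ¬ H.dir c a := by
    intro h
    have hpath : H.AnteriorPath b a :=
      anterior_two (m1 := Mark.tail) (m2 := Mark.arrow) hbc h hbc' (Ne.symm hac') (Ne.symm hab')
    exact anc b a hpath harr
  -- rule out an undirected edge a — c
  have hnua : ¬ H.undir a c := by
    intro h
    have hpath : H.AnteriorPath b a :=
      anterior_two (m1 := Mark.tail) (m2 := Mark.tail) hbc (H.undir_symm _ _ h)
        hbc' (Ne.symm hac') (Ne.symm hab')
    exact anc b a hpath harr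
  have hadj : H.Adj a c := sc1 a b c harr hbc
  constructor
  · intro hd
    have hnbi : ¬ H.bidir a c := by
      intro h
      have hpath : H.AnteriorPath a c :=
        anterior_two (m1 := Mark.arrow) (m2 := Mark.tail) hd hbc hab' hbc' hac'
      exact anc a c hpath (Or.inr h)
    rcases hadj with h | h | h | h
    · exact h
    · exact absurd h hnca
    · exact absurd h hnbi
    · exact absurd h hnua
  · intro hb
    have hnd : ¬ H.dir a c := by
      intro h
      have hpath : H.AnteriorPath a b :=
        anterior_two (m1 := Mark.arrow) (m2 := Mark.tail) h hcb hac' (Ne.symm hbc') hab'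
      exact anc a b hpath (Or.inr hb)
    rcases hadj with h | h | h | h
    · exact absurd h hnd
    · exact absurd h hnca
    · exact h
    · exact absurd h hnua

/-- If some node has an arrowhead pointing at `b`, then the neighborhood of `b` is
complete. -/
lemma complete_hub {H : MixedGraph V} (hH : H.IsSigmaMAG) {a b : V}
    (hab : H.dir a b ∨ H.bidir a b) : H.CompleteNbh b := by
  intro x y hbx hby hxy
  have harr : H.ArrowAt b a := by
    rcases hab with h | h
    · exact Or.inl h
    · exact Or.inr (H.bidir_symm _ _ h)
  have hadj : H.Adj x y := hH.sigma_complete₂ a b x y harr hbx hby hxy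
  have hxb : H.undir x b := H.undir_symm _ _ hbx
  have hyb : H.undir y b := H.undir_symm _ _ hby
  rcases hadj with h | h | h | h
  · exact absurd ((key_step hH (Or.inl h) hyb).1 h)
      (fun hd => ((hH.at_most_one x b).1 hd).2.2 hxb)
  · exact absurd ((key_step hH (Or.inl h) hxb).1 h)
      (fun hd => ((hH.at_most_one y b).1 hd).2.2 hyb)
  · exact absurd ((key_step hH (Or.inr h) hyb).2 h)
      (fun hd => ((hH.at_most_one x b).2 hd) hxb)
  · exact h

/-- **Fundamental property of σ-MAGs.** If a σ-MAG `H` contains a triple `a ∗→ b — c`,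
then `a` and `c` are adjacent, the edge between `a` and `c` is of the same type as the
edge between `a` and `b`, and the neighborhoods of `b` and of `c` are both complete. -/
theorem sigmaMAG_fundamental {V : Type*} (H : MixedGraph V) (hH : H.IsSigmaMAG)
    (a b c : V) (hab : H.dir a b ∨ H.bidir a b) (hbc : H.undir b c) :
    H.Adj a c ∧ (H.dir a b → H.dir a c) ∧ (H.bidir a b → H.bidir a c) ∧
    H.CompleteNbh b ∧ H.CompleteNbh c := by
  have hk := key_step hH hab hbc
  have hac : H.dir a c ∨ H.bidir a c := by
    rcases hab with h | h
    · exact Or.inl (hk.1 h)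
    · exact Or.inr (hk.2 h)
  have hadj : H.Adj a c := by
    rcases hac with h | h
    · exact Or.inl h
    · exact Or.inr (Or.inr (Or.inl h))
  exact ⟨hadj, hk.1, hk.2, complete_hub hH hab, complete_hub hH hac⟩
end

section
/- Let H be a σ-MAG. If H contains an anterior path that starts with a directed edge, i.e., a path v0 → v1 —∗ v2 —∗ ⋯ —∗ vn with n ≥ 2 in which every edge has a tail mark at the endpoint nearer v0 and the first edge is v0 → v1, then v0 is an ancestor of vn in H (v0 ∈ Anc_H(vn)). -/
variable {V : Type*}

lemma anterior_two_s1 {V : Type*} (H : MixedGraph V) {a b c : V} {m m' : Mark}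
    (hab : a ≠ b) (hac : a ≠ c) (hbc : b ≠ c)
    (e1 : H.EdgeMk a b Mark.tail m) (e2 : H.EdgeMk b c Mark.tail m') :
    H.AnteriorPath a c := by
  refine ⟨2, ⟨fun i => if i = 0 then a else if i = 1 then b else c,
    fun _ => Mark.tail, fun i => if i = 0 then m else m', ?_⟩, ?_, ?_, ?_, fun i _ => rfl⟩
  · intro i hi
    interval_cases i <;> simpa using (by assumption : _)
  · intro i j hi hj hij
    interval_cases i <;> interval_cases j <;> simp_all
  · simp
  · simp

/-- If a σ-MAG `H` contains an anterior path `v₀ → v₁ —∗ ⋯ —∗ vₙ` (with `n ≥ 2`)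
starting with a directed edge, then `v₀` is an ancestor of `vₙ` in `H`. -/
theorem anterior_path_starting_directed_ancestor {V : Type*} (H : MixedGraph V)
    (hH : H.IsSigmaMAG) (n : ℕ) (hn : 2 ≤ n) (w : H.Walk n) (hpath : w.IsPath)
    (hanterior : ∀ i < n, w.mk1 i = Mark.tail)
    (hfirst : w.mk2 0 = Mark.arrow) :
    H.Anc (w.vert 0) (w.vert n) := by
  have key : ∀ k, 1 ≤ k → k ≤ n → ∃ p, H.dir p (w.vert k) ∧ H.Anc (w.vert 0) p := by
    intro k hk1 hkn
    induction k with
    | zero => omega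
    | succ k ih =>
      rcases Nat.eq_zero_or_pos k with hk0 | hkpos
      · subst hk0
        have hv := w.valid 0 (by omega)
        rw [hanterior 0 (by omega), hfirst] at hv
        exact ⟨w.vert 0, hv, Relation.ReflTransGen.refl⟩
      · obtain ⟨p, hpd, hpa⟩ := ih hkpos (by omega)
        have hv := w.valid k (by omega)
        rw [hanterior k (by omega)] at hv
        have hne_k : p ≠ w.vert k := fun h => (hH.no_self (w.vert k)).1 (h ▸ hpd)
        cases hmk : w.mk2 k with
        | arrow =>
          rw [hmk] at hv
          exact ⟨w.vert k, hv, hpa.tail hpd⟩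
        | tail =>
          rw [hmk] at hv
          -- hv : H.undir (w.vert k) (w.vert (k+1))
          have hkk1 : w.vert k ≠ w.vert (k + 1) :=
            fun h => (hH.no_self (w.vert (k+1))).2.2 (h ▸ hv)
          have hne_k1 : p ≠ w.vert (k + 1) := by
            intro h
            rw [h] at hpd
            exact ((hH.at_most_one _ (w.vert k)).1 hpd).2.2 (H.undir_symm _ _ hv)
          have hadj : H.Adj p (w.vert (k + 1)) :=
            hH.sigma_complete₁ p (w.vert k) (w.vert (k+1)) (Or.inl hpd) hv
          rcases hadj with h | h | h | h
          · exact ⟨p, h, hpa⟩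
          · exact absurd (Or.inl h) (hH.ancestral p (w.vert (k+1))
              (anterior_two_s1 H hne_k hne_k1 hkk1 (m := Mark.arrow) (m' := Mark.tail) hpd hv))
          · exact absurd (Or.inr h) (hH.ancestral p (w.vert (k+1))
              (anterior_two_s1 H hne_k hne_k1 hkk1 (m := Mark.arrow) (m' := Mark.tail) hpd hv))
          · exact absurd (Or.inl hpd) (hH.ancestral (w.vert k) p
              (anterior_two_s1 H hkk1 hne_k.symm hne_k1.symm (m := Mark.tail) (m' := Mark.tail)
                hv (H.undir_symm _ _ h)))
  obtain ⟨p, hpd, hpa⟩ := key n (by omega) le_rfl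
  exact hpa.tail hpd
end

section
/- Let H be a σ-MAG that represents a DMG G (with nodes V⁺ = V ∪ S) given S, and let a, b be distinct nodes of H. Then: (1) if a ∈ Ant_H(b) (there is an anterior path from a to b in H), then a ∈ Anc_G({b} ∪ S); (2) if H contains an edge between a and b with an arrowhead at b, then there exists a σ-inducing path given S in G between a and b whose edge at b has an arrowhead at b; (3) if H contains the bidirected edge a ↔ b, then there exists a σ-inducing path given S in G between a and b whose edges at both a and b have arrowheads at a and at b respectively. -/
variable {V : Type*}

section RepHelpers

variable {U : Type*} {G : MixedGraph U}

lemma rtg_to_fun {r : U → U → Prop} {u v : U} (h : Relation.ReflTransGen r u v) :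
    ∃ (p : ℕ) (f : ℕ → U), f 0 = u ∧ f p = v ∧ ∀ i < p, r (f i) (f (i + 1)) := by
  induction h with
  | refl => exact ⟨0, fun _ => u, rfl, rfl, fun i hi => absurd hi (by omega)⟩
  | @tail b c hub hbc ih =>
    obtain ⟨p, f, hf0, hfp, hfe⟩ := ih
    refine ⟨p + 1, fun k => if k ≤ p then f k else c, by simp [hf0], by simp, ?_⟩
    intro i hi
    by_cases h1 : i < p
    · simp only [if_pos (by omega : i ≤ p), if_pos (by omega : i + 1 ≤ p)]
      exact hfe i h1
    · have hip : i = p := by omega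
      subst hip
      simp only [if_pos le_rfl, if_neg (by omega : ¬ i + 1 ≤ i), hfp]
      exact hbc

lemma fun_to_path {r : U → U → Prop} :
    ∀ (p : ℕ) (f : ℕ → U), (∀ i < p, r (f i) (f (i + 1))) →
    ∃ (q : ℕ) (g : ℕ → U), g 0 = f 0 ∧ g q = f p ∧ (∀ i < q, r (g i) (g (i + 1))) ∧
      ∀ i j, i ≤ q → j ≤ q → g i = g j → i = j := by
  intro p
  induction p using Nat.strong_induction_on with
  | _ p ih =>
    intro f hf
    by_cases hrep : ∃ i j, i < j ∧ j ≤ p ∧ f i = f j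
    · obtain ⟨i, j, hij, hjp, hfij⟩ := hrep
      have hd1 : 1 ≤ j - i := by omega
      have hlt : p - (j - i) < p := by omega
      have hedges : ∀ k < p - (j - i),
          r ((fun k => if k ≤ i then f k else f (k + (j - i))) k)
            ((fun k => if k ≤ i then f k else f (k + (j - i))) (k + 1)) := by
        intro k hk
        by_cases h1 : k + 1 ≤ i
        · simp only [if_pos (by omega : k ≤ i), if_pos h1]
          exact hf k (by omega)
        · by_cases h2 : k ≤ i
          · have hki : k = i := by omega
            have hjlt : j < p := by omega
            simp only [if_pos h2, if_neg h1]
            rw [hki, hfij]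
            have he : i + 1 + (j - i) = j + 1 := by omega
            rw [he]
            exact hf j hjlt
          · simp only [if_neg h2, if_neg h1]
            have he : k + 1 + (j - i) = k + (j - i) + 1 := by omega
            rw [he]
            exact hf (k + (j - i)) (by omega)
      obtain ⟨q, g, hg0, hgq, hge, hginj⟩ := ih (p - (j - i)) hlt _ hedges
      refine ⟨q, g, ?_, ?_, hge, hginj⟩
      · rw [hg0]; simp
      · rw [hgq]
        by_cases h : p - (j - i) ≤ i
        · have hpj : p = j := by omega
          have hpi : p - (j - i) = i := by omega
          rw [if_pos h, hpi, hfij, hpj]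
        · rw [if_neg h]
          congr 1
          omega
    · refine ⟨p, f, rfl, rfl, hf, ?_⟩
      intro i j hi hj hfeq
      by_contra hne
      rcases Nat.lt_or_ge i j with h | h
      · exact hrep ⟨i, j, h, hj, hfeq⟩
      · exact hrep ⟨j, i, by omega, hi, hfeq.symm⟩

lemma fun_anc {g : ℕ → U} {q : ℕ} (hge : ∀ i < q, G.dir (g i) (g (i + 1))) :
    ∀ i j, i ≤ j → j ≤ q → Relation.ReflTransGen G.dir (g i) (g j) := by
  intro i j hij
  induction j, hij using Nat.le_induction with
  | base => intro _; exact Relation.ReflTransGen.refl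
  | succ j hij ihj =>
    intro h
    exact (ihj (by omega)).tail (hge j (by omega))

lemma ancS_trans {x z c : U} {S : Set U}
    (h1 : G.AncS x ({z} ∪ S)) (h2 : G.AncS z ({c} ∪ S)) : G.AncS x ({c} ∪ S) := by
  obtain ⟨t, ht, hxt⟩ := h1
  rcases ht with ht | ht
  · rw [Set.mem_singleton_iff] at ht
    subst ht
    obtain ⟨u', hu', hzu⟩ := h2
    exact ⟨u', hu', hxt.trans hzu⟩
  · exact ⟨t, Or.inr ht, hxt⟩

lemma scan_lemma {S : Set U} {n : ℕ} {w : G.Walk n}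
    (hind : w.IsSigmaInducing S) {x y : U} (h0 : w.vert 0 = x) (hN : w.vert n = y)
    (hne : ¬ G.AncS y ({x} ∪ S)) :
    ∀ p, p ≤ n - 1 → G.Anc y (w.vert p) → w.mk1 p = Mark.arrow →
      ∃ m, 1 ≤ m ∧ m ≤ n - 1 ∧ G.Sc (w.vert m) y := by
  classical
  intro p
  induction p using Nat.strong_induction_on with
  | _ p ih =>
    intro hp hanc hmk
    rcases Nat.eq_zero_or_pos p with hp0 | hp0
    · exfalso
      subst hp0
      rw [h0] at hanc
      exact hne ⟨x, Or.inl rfl, hanc⟩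
    · rcases Nat.eq_zero_or_pos n with hn0 | hn0
      · omega
      have hpn : p < n := by omega
      by_cases hcol : w.IsCollider p
      · obtain ⟨c, hc, hanc2⟩ := hind.1 p hcol
        rw [h0, hN] at hc
        simp only [Set.mem_union, Set.mem_insert_iff, Set.mem_singleton_iff] at hc
        rcases hc with (rfl | rfl) | hc
        · exact absurd ⟨c, Or.inl rfl, hanc.trans hanc2⟩ hne
        · exact ⟨p, by omega, by omega, ⟨hanc2, hanc⟩⟩
        · exact absurd ⟨c, Or.inr hc, hanc.trans hanc2⟩ hne
      · have hub := hind.2 p hp0 hpn hcol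
        obtain ⟨-, -, hpat⟩ := hub
        rcases hpat with ⟨h1, h2, h3, hsc⟩ | ⟨h1, h2, h3, hsc⟩ | ⟨h1, h2, h3, h4, hsc1, hsc2⟩
        · exact ih (p - 1) (by omega) (by omega) (hanc.trans hsc.1) h1
        · rw [hmk] at h2; exact absurd h2 (by simp)
        · rw [hmk] at h3; exact absurd h3 (by simp)

lemma main_lemma (hG : G.IsDMG) {S : Set U} {x y : U} {n : ℕ}
    (w : G.Walk n) (hn : 0 < n) (hpath : w.IsPath) (h0 : w.vert 0 = x) (hN : w.vert n = y)
    (hind : w.IsSigmaInducing S) (hne : ¬ G.AncS y ({x} ∪ S)) :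
    ∃ (N : ℕ) (u : G.Walk N), 0 < N ∧ u.IsPath ∧ u.vert 0 = x ∧ u.vert N = y ∧
      u.IsSigmaInducing S ∧ u.mk2 (N - 1) = Mark.arrow ∧ u.mk1 0 = w.mk1 0 := by
  classical
  by_cases hlast : w.mk2 (n - 1) = Mark.arrow
  · exact ⟨n, w, hn, hpath, h0, hN, hind, hlast, rfl⟩
  · have hlastt : w.mk2 (n - 1) = Mark.tail := by
      cases hh : w.mk2 (n - 1)
      · rfl
      · exact absurd hh hlast
    have hval := w.valid (n - 1) (by omega)
    have hmk1 : w.mk1 (n - 1) = Mark.arrow := by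
      cases hh : w.mk1 (n - 1)
      · exfalso
        rw [hh, hlastt] at hval
        exact (hG.1 _ _) hval
      · rfl
    have hdir : G.dir y (w.vert (n - 1)) := by
      rw [hmk1, hlastt] at hval
      have he : n - 1 + 1 = n := by omega
      rw [he, hN] at hval
      exact hval
    obtain ⟨m, hm1, hm2, hscm⟩ :=
      scan_lemma hind h0 hN hne (n - 1) le_rfl (Relation.ReflTransGen.single hdir) hmk1
    obtain ⟨p, f, hf0, hfp, hfe⟩ := rtg_to_fun hscm.1
    obtain ⟨q, g, hg0, hgq, hge, hginj⟩ := fun_to_path p f hfe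
    rw [hf0] at hg0
    rw [hfp] at hgq
    have hmn : m < n := by omega
    have hmy : w.vert m ≠ y := by
      intro h
      have := hpath m n (by omega) le_rfl (h.trans hN.symm)
      omega
    have hq1 : 0 < q := by
      rcases Nat.eq_zero_or_pos q with h | h
      · exfalso
        apply hmy
        subst h
        rw [← hg0]
        exact hgq
      · exact h
    have hyanc : G.Anc y (g 0) := by rw [hg0]; exact hscm.2
    have hancy : ∀ s ≤ q, G.Anc (g s) y := by
      intro s hs
      rw [← hgq]
      exact fun_anc hge s q hs le_rfl
    have hanc_any : ∀ s t, s ≤ q → t ≤ q → G.Anc (g s) (g t) := by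
      intro s t hs ht
      exact ((hancy s hs).trans hyanc).trans (fun_anc hge 0 t (Nat.zero_le _) ht)
    have hgsc : ∀ s t, s ≤ q → t ≤ q → G.Sc (g s) (g t) := fun s t hs ht =>
      ⟨hanc_any s t hs ht, hanc_any t s ht hs⟩
    have hexj : ∃ i, i ≤ m ∧ ∃ t, t ≤ q ∧ w.vert i = g t :=
      ⟨m, le_rfl, 0, Nat.zero_le _, hg0.symm⟩
    have hspec := Nat.find_spec hexj
    have hmin : ∀ i < Nat.find hexj, ¬(i ≤ m ∧ ∃ t, t ≤ q ∧ w.vert i = g t) :=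
      fun i h => Nat.find_min hexj h
    set j₀ := Nat.find hexj with hj₀def
    obtain ⟨hj₀m, t₀, ht₀q, hvj⟩ := hspec
    have hj₀pos : 0 < j₀ := by
      rcases Nat.eq_zero_or_pos j₀ with h | h
      · exfalso
        rw [h, h0] at hvj
        refine hne ⟨x, Or.inl rfl, ?_⟩
        rw [hvj]
        exact hyanc.trans (fun_anc hge 0 t₀ (Nat.zero_le _) ht₀q)
      · exact h
    have ht₀q' : t₀ < q := by
      rcases eq_or_lt_of_le ht₀q with h | h
      · exfalso
        rw [h, hgq] at hvj
        have := hpath j₀ n (by omega) le_rfl (hvj.trans hN.symm)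
        omega
      · exact h
    set N := j₀ + (q - t₀) with hNdef
    have hNj : j₀ < N := by omega
    let u : G.Walk N :=
      ⟨fun k => if k ≤ j₀ then w.vert k else g (t₀ + (k - j₀)),
       fun k => if k < j₀ then w.mk1 k else Mark.tail,
       fun k => if k < j₀ then w.mk2 k else Mark.arrow,
       by
        intro k hk
        by_cases hkj : k < j₀
        · simp only [if_pos (by omega : k ≤ j₀), if_pos (by omega : k + 1 ≤ j₀),
            if_pos hkj]
          exact w.valid k (by omega)
        · simp only [if_neg hkj]
          have hix : t₀ + (k - j₀) < q := by omega
          have hstep := hge (t₀ + (k - j₀)) hix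
          by_cases hkj2 : k = j₀
          · simp only [if_pos (by omega : k ≤ j₀), if_neg (by omega : ¬ k + 1 ≤ j₀)]
            show G.dir (w.vert k) (g (t₀ + (k + 1 - j₀)))
            have hst : t₀ + (k - j₀) = t₀ := by omega
            rw [hst] at hstep
            have he2 : t₀ + (j₀ + 1 - j₀) = t₀ + 1 := by omega
            rw [hkj2, hvj, he2]
            exact hstep
          · simp only [if_neg (by omega : ¬ k ≤ j₀), if_neg (by omega : ¬ k + 1 ≤ j₀)]
            show G.dir (g (t₀ + (k - j₀))) (g (t₀ + (k + 1 - j₀)))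
            have he2 : t₀ + (k + 1 - j₀) = t₀ + (k - j₀) + 1 := by omega
            rw [he2]
            exact hstep⟩
    have huvert : ∀ k, u.vert k = if k ≤ j₀ then w.vert k else g (t₀ + (k - j₀)) :=
      fun k => rfl
    have humk1 : ∀ k, u.mk1 k = if k < j₀ then w.mk1 k else Mark.tail := fun k => rfl
    have humk2 : ∀ k, u.mk2 k = if k < j₀ then w.mk2 k else Mark.arrow := fun k => rfl
    have hu0 : u.vert 0 = x := by rw [huvert, if_pos (Nat.zero_le _)]; exact h0
    have huN : u.vert N = y := by
      rw [huvert, if_neg (by omega)]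
      have he : t₀ + (N - j₀) = q := by omega
      rw [he, hgq]
    have hupath : u.IsPath := by
      intro i j hi hj hij
      rw [huvert, huvert] at hij
      by_cases hij₀ : i ≤ j₀ <;> by_cases hjj₀ : j ≤ j₀
      · rw [if_pos hij₀, if_pos hjj₀] at hij
        exact hpath i j (by omega) (by omega) hij
      · rw [if_pos hij₀, if_neg hjj₀] at hij
        exfalso
        rcases eq_or_lt_of_le hij₀ with h | h
        · rw [h, hvj] at hij
          have := hginj t₀ (t₀ + (j - j₀)) ht₀q (by omega) hij
          omega
        · exact hmin i h ⟨by omega, t₀ + (j - j₀), by omega, hij⟩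
      · rw [if_neg hij₀, if_pos hjj₀] at hij
        exfalso
        rcases eq_or_lt_of_le hjj₀ with h | h
        · rw [h, hvj] at hij
          have := hginj (t₀ + (i - j₀)) t₀ (by omega) ht₀q hij
          omega
        · exact hmin j h ⟨by omega, t₀ + (i - j₀), by omega, hij.symm⟩
      · rw [if_neg hij₀, if_neg hjj₀] at hij
        have := hginj (t₀ + (i - j₀)) (t₀ + (j - j₀)) (by omega) (by omega) hij
        omega
    have hsetend : ({u.vert 0, u.vert N} : Set U) ∪ S = {w.vert 0, w.vert n} ∪ S := by
      rw [hu0, huN, h0, hN]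
    have huind : u.IsSigmaInducing S := by
      constructor
      · intro k hcol
        obtain ⟨hk1, hk2, hc2, hc1⟩ := hcol
        rw [humk1] at hc1
        have hkj : k < j₀ := by
          by_contra h
          rw [if_neg h] at hc1
          exact Mark.noConfusion hc1
        rw [if_pos hkj] at hc1
        rw [humk2, if_pos (by omega : k - 1 < j₀)] at hc2
        have hwcol : w.IsCollider k := ⟨hk1, by omega, hc2, hc1⟩
        have := hind.1 k hwcol
        rw [huvert, if_pos (by omega : k ≤ j₀), hsetend]
        exact this
      · intro k hk1 hk2 hncol
        by_cases hkj : k < j₀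
        · -- matches w at position k
          have ek1 : u.mk1 (k - 1) = w.mk1 (k - 1) := by
            rw [humk1, if_pos (by omega : k - 1 < j₀)]
          have ek2 : u.mk2 (k - 1) = w.mk2 (k - 1) := by
            rw [humk2, if_pos (by omega : k - 1 < j₀)]
          have ek3 : u.mk1 k = w.mk1 k := by rw [humk1, if_pos hkj]
          have ek4 : u.mk2 k = w.mk2 k := by rw [humk2, if_pos hkj]
          have ev1 : u.vert (k - 1) = w.vert (k - 1) := by
            rw [huvert, if_pos (by omega : k - 1 ≤ j₀)]
          have ev2 : u.vert k = w.vert k := by rw [huvert, if_pos (by omega : k ≤ j₀)]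
          have ev3 : u.vert (k + 1) = w.vert (k + 1) := by
            rw [huvert, if_pos (by omega : k + 1 ≤ j₀)]
          have hwncol : ¬ w.IsCollider k := by
            intro hc
            exact hncol ⟨hk1, hk2, by rw [ek2]; exact hc.2.2.1, by rw [ek3]; exact hc.2.2.2⟩
          have hub := hind.2 k hk1 (by omega) hwncol
          obtain ⟨-, -, hpat⟩ := hub
          refine ⟨hk1, hk2, ?_⟩
          rw [ek1, ek2, ek3, ek4, ev1, ev2, ev3]
          exact hpat
        · have escj : G.Sc (g t₀) (g (t₀ + 1)) := hgsc t₀ (t₀ + 1) ht₀q (by omega)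
          by_cases hkj2 : k = j₀
          · -- junction
            have ek3 : u.mk1 k = Mark.tail := by rw [humk1, if_neg hkj]
            have ek4 : u.mk2 k = Mark.arrow := by rw [humk2, if_neg hkj]
            have ev1 : u.vert (k - 1) = w.vert (k - 1) := by
              rw [huvert, if_pos (by omega : k - 1 ≤ j₀)]
            have ev2' : u.vert k = w.vert k := by
              rw [huvert, if_pos (by omega : k ≤ j₀)]
            have ev2 : u.vert k = g t₀ := by
              rw [ev2', hkj2, hvj]
            have ev3 : u.vert (k + 1) = g (t₀ + 1) := by
              rw [huvert, if_neg (by omega)]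
              congr 1
              omega
            by_cases hw2 : w.mk2 (k - 1) = Mark.arrow
            · refine ⟨hk1, hk2, Or.inr (Or.inl ⟨?_, ek3, ek4, ?_⟩)⟩
              · rw [humk2, if_pos (by omega : k - 1 < j₀)]
                exact hw2
              · rw [ev2, ev3]
                exact escj
            · have hw2t : w.mk2 (k - 1) = Mark.tail := by
                cases hh : w.mk2 (k - 1)
                · rfl
                · exact absurd hh hw2
              have hwncol : ¬ w.IsCollider k := by
                intro hc
                exact hw2 hc.2.2.1
              have hkn : k < n := by omega
              have hub := hind.2 k hk1 hkn hwncol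
              obtain ⟨-, -, hpat⟩ := hub
              have hkey : w.mk1 (k - 1) = Mark.arrow ∧ G.Sc (w.vert k) (w.vert (k - 1)) := by
                rcases hpat with ⟨h1, h2, h3, hsc⟩ | ⟨h1, h2, h3, hsc⟩ |
                  ⟨h1, h2, h3, h4, hsc1, hsc2⟩
                · exact ⟨h1, hsc⟩
                · rw [hw2t] at h1; exact absurd h1 (by simp)
                · exact ⟨h1, hsc1⟩
              refine ⟨hk1, hk2, Or.inr (Or.inr ⟨?_, ?_, ek3, ek4, ?_, ?_⟩)⟩
              · rw [humk1, if_pos (by omega : k - 1 < j₀)]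
                exact hkey.1
              · rw [humk2, if_pos (by omega : k - 1 < j₀)]
                exact hw2t
              · rw [ev2', ev1]
                exact hkey.2
              · rw [ev2, ev3]
                exact escj
          · -- strictly inside the directed suffix
            have hkj3 : j₀ < k := by omega
            have ek2 : u.mk2 (k - 1) = Mark.arrow := by
              rw [humk2, if_neg (by omega : ¬ k - 1 < j₀)]
            have ek3 : u.mk1 k = Mark.tail := by rw [humk1, if_neg hkj]
            have ek4 : u.mk2 k = Mark.arrow := by rw [humk2, if_neg hkj]
            have ev2 : u.vert k = g (t₀ + (k - j₀)) := by
              rw [huvert, if_neg (by omega)]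
            have ev3 : u.vert (k + 1) = g (t₀ + (k + 1 - j₀)) := by
              rw [huvert, if_neg (by omega)]
            refine ⟨hk1, hk2, Or.inr (Or.inl ⟨ek2, ek3, ek4, ?_⟩)⟩
            rw [ev2, ev3]
            exact hgsc _ _ (by omega) (by omega)
    refine ⟨N, u, by omega, hupath, hu0, huN, huind, ?_, ?_⟩
    · rw [humk2, if_neg (by omega : ¬ N - 1 < j₀)]
    · rw [humk1, if_pos hj₀pos]

lemma reverse_isPath {n : ℕ} {w : G.Walk n} (h : w.IsPath) : w.reverse.IsPath := by
  intro i j hi hj hij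
  have := h (n - i) (n - j) (by omega) (by omega) hij
  omega

lemma reverse_sigmaInducing {S : Set U} {n : ℕ} {w : G.Walk n}
    (h : w.IsSigmaInducing S) : w.reverse.IsSigmaInducing S := by
  constructor
  · intro k hcol
    obtain ⟨hk1, hk2, hm2, hm1⟩ := hcol
    have hm2' : w.mk1 (n - 1 - (k - 1)) = Mark.arrow := hm2
    have hm1' : w.mk2 (n - 1 - k) = Mark.arrow := hm1
    have hwcol : w.IsCollider (n - k) := by
      refine ⟨by omega, by omega, ?_, ?_⟩
      · have he : n - k - 1 = n - 1 - k := by omega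
        rw [he]
        exact hm1'
      · have he : n - k = n - 1 - (k - 1) := by omega
        rw [he]
        exact hm2'
    have hanc := h.1 (n - k) hwcol
    show G.AncS (w.vert (n - k)) ({w.vert (n - 0), w.vert (n - n)} ∪ S)
    have hset : ({w.vert (n - 0), w.vert (n - n)} : Set U) ∪ S =
        {w.vert 0, w.vert n} ∪ S := by
      rw [Nat.sub_zero, Nat.sub_self, Set.pair_comm]
    rw [hset]
    exact hanc
  · intro k hk1 hk2 hncol
    have hwncol : ¬ w.IsCollider (n - k) := by
      intro hc
      apply hncol
      obtain ⟨-, -, hc2, hc1⟩ := hc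
      refine ⟨hk1, hk2, ?_, ?_⟩
      · show w.mk1 (n - 1 - (k - 1)) = Mark.arrow
        have he : n - 1 - (k - 1) = n - k := by omega
        rw [he]
        exact hc1
      · show w.mk2 (n - 1 - k) = Mark.arrow
        have he : n - 1 - k = n - k - 1 := by omega
        rw [he]
        exact hc2
    have hub := h.2 (n - k) (by omega) (by omega) hwncol
    obtain ⟨-, -, hpat⟩ := hub
    refine ⟨hk1, hk2, ?_⟩
    rcases hpat with ⟨h1, h2, h3, hsc⟩ | ⟨h1, h2, h3, hsc⟩ | ⟨h1, h2, h3, h4, hsc1, hsc2⟩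
    · -- pattern (i) at n - k gives pattern (ii) for the reverse at k
      refine Or.inr (Or.inl ⟨?_, ?_, ?_, ?_⟩)
      · show w.mk1 (n - 1 - (k - 1)) = Mark.arrow
        have he : n - 1 - (k - 1) = n - k := by omega
        rw [he]
        exact h3
      · show w.mk2 (n - 1 - k) = Mark.tail
        have he : n - 1 - k = n - k - 1 := by omega
        rw [he]
        exact h2
      · show w.mk1 (n - 1 - k) = Mark.arrow
        have he : n - 1 - k = n - k - 1 := by omega
        rw [he]
        exact h1
      · show G.Sc (w.vert (n - k)) (w.vert (n - (k + 1)))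
        have he : n - (k + 1) = n - k - 1 := by omega
        rw [he]
        exact hsc
    · refine Or.inl ⟨?_, ?_, ?_, ?_⟩
      · show w.mk2 (n - 1 - (k - 1)) = Mark.arrow
        have he : n - 1 - (k - 1) = n - k := by omega
        rw [he]
        exact h3
      · show w.mk1 (n - 1 - (k - 1)) = Mark.tail
        have he : n - 1 - (k - 1) = n - k := by omega
        rw [he]
        exact h2
      · show w.mk2 (n - 1 - k) = Mark.arrow
        have he : n - 1 - k = n - k - 1 := by omega
        rw [he]
        exact h1
      · show G.Sc (w.vert (n - k)) (w.vert (n - (k - 1)))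
        have he : n - (k - 1) = n - k + 1 := by omega
        rw [he]
        exact hsc
    · refine Or.inr (Or.inr ⟨?_, ?_, ?_, ?_, ?_, ?_⟩)
      · show w.mk2 (n - 1 - (k - 1)) = Mark.arrow
        have he : n - 1 - (k - 1) = n - k := by omega
        rw [he]
        exact h4
      · show w.mk1 (n - 1 - (k - 1)) = Mark.tail
        have he : n - 1 - (k - 1) = n - k := by omega
        rw [he]
        exact h3
      · show w.mk2 (n - 1 - k) = Mark.tail
        have he : n - 1 - k = n - k - 1 := by omega
        rw [he]
        exact h2
      · show w.mk1 (n - 1 - k) = Mark.arrow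
        have he : n - 1 - k = n - k - 1 := by omega
        rw [he]
        exact h1
      · show G.Sc (w.vert (n - k)) (w.vert (n - (k - 1)))
        have he : n - (k - 1) = n - k + 1 := by omega
        rw [he]
        exact hsc2
      · show G.Sc (w.vert (n - k)) (w.vert (n - (k + 1)))
        have he : n - (k + 1) = n - k - 1 := by omega
        rw [he]
        exact hsc1

end RepHelpers

lemma anterior_ancS {V W : Type*} (H : MixedGraph V) (G : MixedGraph W) (ι : V → W)
    (htl : ∀ a b : V, H.TailAt a b → G.AncS (ι a) ({ι b} ∪ (Set.range ι)ᶜ))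
    {a b : V} (hant : H.AnteriorPath a b) :
    G.AncS (ι a) ({ι b} ∪ (Set.range ι)ᶜ) := by
  obtain ⟨n, w, -, h0, hN, hm⟩ := hant
  have key : ∀ d ≤ n, G.AncS (ι (w.vert (n - d))) ({ι b} ∪ (Set.range ι)ᶜ) := by
    intro d
    induction d with
    | zero =>
      intro _
      rw [Nat.sub_zero, hN]
      exact ⟨ι b, Or.inl rfl, Relation.ReflTransGen.refl⟩
    | succ d ihd =>
      intro hd
      have hp : n - (d + 1) < n := by omega
      have hval := w.valid (n - (d + 1)) hp
      rw [hm _ hp] at hval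
      have htail' : H.TailAt (w.vert (n - (d + 1))) (w.vert (n - (d + 1) + 1)) := by
        cases hh : w.mk2 (n - (d + 1))
        · rw [hh] at hval
          exact Or.inr hval
        · rw [hh] at hval
          exact Or.inl hval
      have hstep := htl _ _ htail'
      have heq : n - (d + 1) + 1 = n - d := by omega
      rw [heq] at hstep
      exact ancS_trans hstep (ihd (by omega))
  have hkey := key n le_rfl
  rwa [Nat.sub_self, h0] at hkey


/-- Let `H` be a σ-MAG that represents a DMG `G` given `S` (where `S = (Set.range ι)ᶜ`),
and let `a ≠ b` be nodes of `H`. Then (1) an anterior path from `a` to `b` in `H`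
yields `a ∈ Anc_G({b} ∪ S)`; (2) an edge `a ∗→ b` in `H` yields a σ-inducing path
given `S` in `G` between `a` and `b` that is into `b`; (3) an edge `a ↔ b` in `H`
yields a σ-inducing path given `S` in `G` between `a` and `b` into both `a` and `b`. -/
theorem represents_elementary_properties {V W : Type*} (H : MixedGraph V)
    (G : MixedGraph W) (ι : V → W) (hH : H.IsSigmaMAG) (hG : G.IsDMG)
    (hrep : Represents H G ι) (a b : V) (hab : a ≠ b) :
    (H.AnteriorPath a b → G.AncS (ι a) ({ι b} ∪ (Set.range ι)ᶜ)) ∧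
    (H.ArrowAt b a →
      ∃ (n : ℕ) (w : G.Walk n), 0 < n ∧ w.IsPath ∧ w.vert 0 = ι a ∧ w.vert n = ι b ∧
        w.IsSigmaInducing (Set.range ι)ᶜ ∧ w.mk2 (n - 1) = Mark.arrow) ∧
    (H.bidir a b →
      ∃ (n : ℕ) (w : G.Walk n), 0 < n ∧ w.IsPath ∧ w.vert 0 = ι a ∧ w.vert n = ι b ∧
        w.IsSigmaInducing (Set.range ι)ᶜ ∧ w.mk1 0 = Mark.arrow ∧
        w.mk2 (n - 1) = Mark.arrow) := by
  obtain ⟨hι, -, -, hadj, harr, htl⟩ := hrep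
  refine ⟨fun hant => anterior_ancS H G ι htl hant, ?_, ?_⟩
  · intro harrba
    have hAdj : H.Adj a b := by
      rcases harrba with h | h
      · exact Or.inl h
      · exact Or.inr (Or.inr (Or.inl (H.bidir_symm _ _ h)))
    obtain ⟨n, w, hpath, h0, hN, hind⟩ := (hadj a b hab).1 hAdj
    have hne : ¬ G.AncS (ι b) ({ι a} ∪ (Set.range ι)ᶜ) := harr b a harrba
    have hn : 0 < n := by
      rcases Nat.eq_zero_or_pos n with h | h
      · exfalso
        subst h
        exact hab (hι (h0.symm.trans hN))
      · exact h
    obtain ⟨N, u, hN0, hup, hu0, huN, huind, hulast, -⟩ :=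
      main_lemma hG w hn hpath h0 hN hind hne
    exact ⟨N, u, hN0, hup, hu0, huN, huind, hulast⟩
  · intro hbid
    have h1 : ¬ G.AncS (ι b) ({ι a} ∪ (Set.range ι)ᶜ) :=
      harr b a (Or.inr (H.bidir_symm _ _ hbid))
    have h2 : ¬ G.AncS (ι a) ({ι b} ∪ (Set.range ι)ᶜ) := harr a b (Or.inr hbid)
    have hAdj : H.Adj a b := Or.inr (Or.inr (Or.inl hbid))
    obtain ⟨n, w, hpath, h0, hN, hind⟩ := (hadj a b hab).1 hAdj
    have hn : 0 < n := by
      rcases Nat.eq_zero_or_pos n with h | h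
      · exfalso
        subst h
        exact hab (hι (h0.symm.trans hN))
      · exact h
    obtain ⟨N1, u1, hN1, hp1, h10, h1N, hind1, hlast1, -⟩ :=
      main_lemma hG w hn hpath h0 hN hind h1
    have hrevp := reverse_isPath hp1
    have hrevind := reverse_sigmaInducing hind1
    have hrev0 : u1.reverse.vert 0 = ι b := by
      show u1.vert (N1 - 0) = ι b
      rw [Nat.sub_zero]
      exact h1N
    have hrevN : u1.reverse.vert N1 = ι a := by
      show u1.vert (N1 - N1) = ι a
      rw [Nat.sub_self]
      exact h10
    obtain ⟨N2, u2, hN2, hp2, h20, h2N, hind2, hlast2, hfirst2⟩ :=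
      main_lemma hG u1.reverse hN1 hrevp hrev0 hrevN hrevind h2
    have hfirst2' : u2.mk1 0 = Mark.arrow := by
      rw [hfirst2]
      show u1.mk2 (N1 - 1 - 0) = Mark.arrow
      rw [Nat.sub_zero]
      exact hlast1
    refine ⟨N2, u2.reverse, hN2, reverse_isPath hp2, ?_, ?_,
      reverse_sigmaInducing hind2, ?_, ?_⟩
    · show u2.vert (N2 - 0) = ι a
      rw [Nat.sub_zero]
      exact h2N
    · show u2.vert (N2 - N2) = ι b
      rw [Nat.sub_self]
      exact h20
    · show u2.mk2 (N2 - 1 - 0) = Mark.arrow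
      rw [Nat.sub_zero]
      exact hlast2
    · show u2.mk1 (N2 - 1 - (N2 - 1)) = Mark.arrow
      rw [Nat.sub_self]
      exact hfirst2'
end

section
/- Let H be a mixed graph with nodes V and edges of the types {→, ←, ↔, —}, and let G be a DMG with nodes V⁺ = V ∪ S. If H represents G given S, then H is a σ-MAG. -/
variable {V : Type*}

section Aux

variable {X : Type*} {G : MixedGraph X}

open Mark

lemma MixedGraph.IsDMG.edge_ne (hG : G.IsDMG) {x y : X} {m₁ m₂ : Mark}
    (h : G.EdgeMk x y m₁ m₂) : x ≠ y := by
  rintro rfl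
  cases m₁ <;> cases m₂ <;> simp only [MixedGraph.EdgeMk] at h
  · exact hG.1 x x h
  · exact (hG.2 x).1 h
  · exact (hG.2 x).1 h
  · exact (hG.2 x).2 h

lemma MixedGraph.IsDMG.edge_cases (hG : G.IsDMG) {x y : X} {m₁ m₂ : Mark}
    (h : G.EdgeMk x y m₁ m₂) :
    (m₁ = tail ∧ m₂ = arrow ∧ G.dir x y) ∨ (m₁ = arrow ∧ m₂ = tail ∧ G.dir y x) ∨
    (m₁ = arrow ∧ m₂ = arrow ∧ G.bidir x y) := by
  cases m₁ <;> cases m₂ <;> simp only [MixedGraph.EdgeMk] at h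
  · exact absurd h (hG.1 x y)
  · exact Or.inl ⟨rfl, rfl, h⟩
  · exact Or.inr (Or.inl ⟨rfl, rfl, h⟩)
  · exact Or.inr (Or.inr ⟨rfl, rfl, h⟩)

lemma MixedGraph.ancS_of_mem {v : X} {T : Set X} (h : v ∈ T) : G.AncS v T :=
  ⟨v, h, Relation.ReflTransGen.refl⟩

lemma MixedGraph.Anc.ancS {v u : X} {T : Set X} (h : G.Anc v u) (h2 : G.AncS u T) :
    G.AncS v T := by
  obtain ⟨t, ht, h3⟩ := h2
  exact ⟨t, ht, h.trans h3⟩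

lemma MixedGraph.AncS.mono {v : X} {T T' : Set X} (h : G.AncS v T) (hT : T ⊆ T') :
    G.AncS v T' := by
  obtain ⟨t, ht, h3⟩ := h
  exact ⟨t, hT ht, h3⟩

/-- ancestry along a chain of directed edges -/
lemma MixedGraph.anc_of_chain {m : ℕ} (f : ℕ → X)
    (hdir : ∀ p, p < m → G.dir (f p) (f (p + 1))) :
    ∀ i d, i + d ≤ m → G.Anc (f i) (f (i + d)) := by
  intro i d
  induction d with
  | zero => intro _; exact Relation.ReflTransGen.refl
  | succ d ih =>
    intro hd
    have h1 := ih (by omega)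
    have h2 := hdir (i + d) (by omega)
    exact Relation.ReflTransGen.tail h1 h2

lemma MixedGraph.anc_of_chain' {m : ℕ} (f : ℕ → X)
    (hdir : ∀ p, p < m → G.dir (f p) (f (p + 1))) {i j : ℕ} (hij : i ≤ j) (hj : j ≤ m) :
    G.Anc (f i) (f j) := by
  have := MixedGraph.anc_of_chain (G := G) f hdir i (j - i) (by omega)
  rwa [show i + (j - i) = j by omega] at this

/-- A directed walk realizing an ancestor relation. -/
lemma MixedGraph.exists_dirWalk {u v : X} (h : G.Anc u v) :
    ∃ (m : ℕ) (D : G.Walk m), D.vert 0 = u ∧ D.vert m = v ∧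
      (∀ p, p < m → G.dir (D.vert p) (D.vert (p + 1))) ∧
      (∀ p, D.mk1 p = tail) ∧ (∀ p, D.mk2 p = arrow) := by
  induction h with
  | refl =>
    exact ⟨0, ⟨fun _ => u, fun _ => tail, fun _ => arrow, fun i hi => absurd hi (by omega)⟩,
      rfl, rfl, fun p hp => absurd hp (by omega), fun _ => rfl, fun _ => rfl⟩
  | @tail b c h1 h2 ih =>
    obtain ⟨m, D, hD0, hDm, hdir, hm1, hm2⟩ := ih
    refine ⟨m + 1, ⟨fun k => if k ≤ m then D.vert k else c, fun _ => tail, fun _ => arrow,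
      ?_⟩, ?_, ?_, ?_, fun _ => rfl, fun _ => rfl⟩
    · intro i hi
      show G.EdgeMk (if i ≤ m then D.vert i else c) (if i + 1 ≤ m then D.vert (i+1) else c)
        tail arrow
      by_cases h3 : i + 1 ≤ m
      · rw [if_pos (by omega), if_pos h3]
        exact hdir i (by omega)
      · rw [if_pos (show i ≤ m by omega), if_neg h3]
        show G.dir (D.vert i) c
        rw [show i = m by omega, hDm]; exact h2
    · simpa using hD0
    · simp
    · intro p hp
      show G.dir (if p ≤ m then D.vert p else c) (if p + 1 ≤ m then D.vert (p+1) else c)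
      by_cases h3 : p + 1 ≤ m
      · rw [if_pos (by omega), if_pos h3]; exact hdir p (by omega)
      · rw [if_pos (show p ≤ m by omega), if_neg h3, show p = m by omega, hDm]; exact h2

end Aux
section Aux2

variable {X : Type*} {G : MixedGraph X}

open Mark

/-- relative σ-inducing walk: every collider is an ancestor of `T`, every internal
non-collider is unblockable. -/
def MixedGraph.RelInd (G : MixedGraph X) (T : Set X) {n : ℕ} (w : G.Walk n) : Prop :=
  (∀ k, w.IsCollider k → G.AncS (w.vert k) T) ∧
  (∀ k, 0 < k → k < n → ¬ w.IsCollider k → w.Unblockable k)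

lemma MixedGraph.RelInd.mono' {T T' : Set X} {n : ℕ} {w : G.Walk n}
    (h : G.RelInd T w) (hT : ∀ t ∈ T, G.AncS t T') : G.RelInd T' w := by
  refine ⟨fun k hk => ?_, h.2⟩
  obtain ⟨t, ht, h3⟩ := h.1 k hk
  exact h3.ancS (hT t ht)

lemma MixedGraph.Walk.collider_of_eq {n1 n2 : ℕ} {w1 : G.Walk n1} {w2 : G.Walk n2} {k : ℕ}
    (h : w1.IsCollider k) (hk : k < n2)
    (hm2 : w2.mk2 (k - 1) = w1.mk2 (k - 1)) (hm1 : w2.mk1 k = w1.mk1 k) :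
    w2.IsCollider k :=
  ⟨h.1, hk, by rw [hm2]; exact h.2.2.1, by rw [hm1]; exact h.2.2.2⟩

lemma MixedGraph.Walk.Unblockable.transfer {n1 n2 : ℕ} {w1 : G.Walk n1} {w2 : G.Walk n2} {k : ℕ}
    (h : w1.Unblockable k) (hk : k < n2)
    (hv1 : w2.vert (k - 1) = w1.vert (k - 1)) (hv2 : w2.vert k = w1.vert k)
    (hv3 : w2.vert (k + 1) = w1.vert (k + 1))
    (hm1 : w2.mk1 (k - 1) = w1.mk1 (k - 1)) (hm2 : w2.mk2 (k - 1) = w1.mk2 (k - 1))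
    (hm3 : w2.mk1 k = w1.mk1 k) (hm4 : w2.mk2 k = w1.mk2 k) :
    w2.Unblockable k := by
  obtain ⟨h0, -, hc⟩ := h
  exact ⟨h0, hk, by rw [hv1, hv2, hv3, hm1, hm2, hm3, hm4]; exact hc⟩

/-- Lemma C: on a relative σ-inducing walk, if edge `i` has an arrowhead at its right
end and edge `j` has an arrowhead at its left end, then `vert (i+1)` is an ancestor
of `T`. -/
lemma MixedGraph.RelInd.anc_between {T : Set X} {n : ℕ} {w : G.Walk n}
    (hw : G.RelInd T w) :
    ∀ gap i j, j - i = gap → i < j → j < n → w.mk2 i = arrow → w.mk1 j = arrow →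
      G.AncS (w.vert (i + 1)) T := by
  intro gap
  induction gap using Nat.strong_induction_on with
  | _ gap ih =>
    intro i j hgap hij hjn h2 h1
    by_cases hij1 : i + 1 = j
    · have hc : w.IsCollider j :=
        ⟨by omega, hjn, by rw [show j - 1 = i by omega]; exact h2, h1⟩
      rw [show i + 1 = j from hij1]
      exact hw.1 j hc
    · -- i + 1 < j
      by_cases hcol : w.IsCollider (i + 1)
      · exact hw.1 _ hcol
      · have hub := hw.2 (i + 1) (by omega) (by omega) hcol
        obtain ⟨-, -, hc⟩ := hub
        rw [show i + 1 - 1 = i by omega] at hc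
        rcases hc with ⟨-, hct, -⟩ | ⟨-, hmt, hma, hsc⟩ | ⟨-, hct, -⟩
        · rw [h2] at hct; exact absurd hct (by simp)
        · have := ih (j - (i + 1)) (by omega) (i + 1) j rfl (by omega) hjn hma h1
          exact hsc.1.ancS this
        · rw [h2] at hct; exact absurd hct (by simp)

end Aux2
section Aux3

variable {X : Type*} {G : MixedGraph X}

open Mark

/-- Excise the segment between positions `i` and `j` (which carry the same vertex). -/
def MixedGraph.Walk.excise {n : ℕ} (w : G.Walk n) (i j : ℕ) (hij : i < j) (hjn : j ≤ n)
    (hv : w.vert i = w.vert j) : G.Walk (n - (j - i)) where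
  vert k := if k < i then w.vert k else w.vert (k + (j - i))
  mk1 k := if k < i then w.mk1 k else w.mk1 (k + (j - i))
  mk2 k := if k < i then w.mk2 k else w.mk2 (k + (j - i))
  valid k hk := by
    by_cases h1 : k + 1 < i
    · simp only [if_pos (show k < i by omega), if_pos h1]
      exact w.valid k (by omega)
    · by_cases h2 : k < i
      · -- k + 1 = i
        have hki : k + 1 = i := by omega
        simp only [if_pos h2, if_neg h1]
        have := w.valid k (by omega)
        rw [show k + 1 + (j - i) = j by omega]
        rwa [show k + 1 = i from hki, hv] at this
      · simp only [if_neg h2, if_neg h1]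
        have := w.valid (k + (j - i)) (by omega)
        rwa [show k + (j - i) + 1 = k + 1 + (j - i) by omega] at this

namespace MixedGraph.Walk

variable {n : ℕ} {w : G.Walk n} {i j : ℕ} {hij : i < j} {hjn : j ≤ n}
  {hv : w.vert i = w.vert j}

lemma excise_vert_le {k : ℕ} (hk : k ≤ i) :
    (w.excise i j hij hjn hv).vert k = w.vert k := by
  by_cases h : k < i
  · exact if_pos h
  · have hki : k = i := by omega
    show (if k < i then w.vert k else w.vert (k + (j - i))) = w.vert k
    rw [if_neg h, hki, show i + (j - i) = j by omega, ← hv]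

lemma excise_vert_ge {k : ℕ} (hk : i ≤ k) :
    (w.excise i j hij hjn hv).vert k = w.vert (k + (j - i)) := by
  by_cases h : k < i
  · omega
  · exact if_neg h

lemma excise_mk1_lt {k : ℕ} (hk : k < i) :
    (w.excise i j hij hjn hv).mk1 k = w.mk1 k := if_pos hk

lemma excise_mk1_ge {k : ℕ} (hk : i ≤ k) :
    (w.excise i j hij hjn hv).mk1 k = w.mk1 (k + (j - i)) := if_neg (by omega)

lemma excise_mk2_lt {k : ℕ} (hk : k < i) :
    (w.excise i j hij hjn hv).mk2 k = w.mk2 k := if_pos hk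

lemma excise_mk2_ge {k : ℕ} (hk : i ≤ k) :
    (w.excise i j hij hjn hv).mk2 k = w.mk2 (k + (j - i)) := if_neg (by omega)

end MixedGraph.Walk

open MixedGraph.Walk in
lemma MixedGraph.RelInd.excise {T : Set X} {n : ℕ} {w : G.Walk n} (h : G.RelInd T w)
    {i j : ℕ} (hij : i < j) (hjn : j ≤ n) (hv : w.vert i = w.vert j) :
    G.RelInd T (w.excise i j hij hjn hv) := by
  set w' := w.excise i j hij hjn hv with hw'
  have hn' : n - (j - i) ≤ n := by omega
  constructor
  · -- colliders
    intro k hk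
    obtain ⟨hk0, hkn, hkm2, hkm1⟩ := hk
    rcases lt_trichotomy k i with hki | hki | hki
    · have hcol : w.IsCollider k :=
        ⟨hk0, by omega, by rw [← excise_mk2_lt (show k - 1 < i by omega)]; exact hkm2,
         by rw [← excise_mk1_lt hki]; exact hkm1⟩
      have := h.1 k hcol
      rwa [← excise_vert_le (le_of_lt hki)] at this
    · -- junction
      subst hki
      rw [excise_mk2_lt (show k - 1 < k by omega)] at hkm2
      rw [excise_mk1_ge (le_refl k)] at hkm1
      have hjlt : j < n := by omega
      have := h.anc_between (j - (k - 1)) (k - 1) (k + (j - k)) (by omega) (by omega)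
        (by omega) hkm2 (by rwa [show k + (j - k) = j by omega] at hkm1 ⊢)
      rw [show k - 1 + 1 = k by omega] at this
      rwa [← excise_vert_le (le_refl k)] at this
    · have hcol : w.IsCollider (k + (j - i)) :=
        ⟨by omega, by omega,
         by rw [show k + (j - i) - 1 = k - 1 + (j - i) by omega,
              ← excise_mk2_ge (show i ≤ k - 1 by omega)]; exact hkm2,
         by rw [← excise_mk1_ge (le_of_lt hki)]; exact hkm1⟩
      have := h.1 _ hcol
      rwa [← excise_vert_ge (le_of_lt hki)] at this
  · -- non-colliders
    intro k hk0 hkn hnc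
    rcases lt_trichotomy k i with hki | hki | hki
    · -- unchanged prefix
      have hwnc : ¬ w.IsCollider k := by
        intro hc
        exact hnc ⟨hc.1, hkn, by rw [excise_mk2_lt (show k - 1 < i by omega)]; exact hc.2.2.1,
          by rw [excise_mk1_lt hki]; exact hc.2.2.2⟩
      have hub := h.2 k hk0 (by omega) hwnc
      exact hub.transfer hkn (excise_vert_le (by omega)) (excise_vert_le (by omega))
        (excise_vert_le (by omega)) (excise_mk1_lt (by omega)) (excise_mk2_lt (by omega))
        (excise_mk1_lt hki) (excise_mk2_lt hki)
    · -- junction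
      subst hki
      have hjlt : j < n := by omega
      have em2 : w'.mk2 (k - 1) = w.mk2 (k - 1) := excise_mk2_lt (by omega)
      have em1 : w'.mk1 k = w.mk1 j := by
        rw [excise_mk1_ge (le_refl k), show k + (j - k) = j by omega]
      have evm : w'.vert k = w.vert k := excise_vert_le (le_refl k)
      have evl : w'.vert (k - 1) = w.vert (k - 1) := excise_vert_le (by omega)
      have evr : w'.vert (k + 1) = w.vert (j + 1) := by
        rw [excise_vert_ge (by omega), show k + 1 + (j - k) = j + 1 by omega]
      have em2' : w'.mk2 k = w.mk2 j := by
        rw [excise_mk2_ge (le_refl k), show k + (j - k) = j by omega]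
      -- facts from position i side (when left mark is a tail)
      have hleft : w.mk2 (k - 1) = tail →
          w.mk1 (k - 1) = arrow ∧ G.Sc (w.vert k) (w.vert (k - 1)) := by
        intro ht
        have hwnc : ¬ w.IsCollider k := fun hc => by rw [hc.2.2.1] at ht; cases ht
        have hub := h.2 k hk0 (by omega) hwnc
        obtain ⟨-, -, hc⟩ := hub
        rcases hc with ⟨ha, -, -, hsc⟩ | ⟨ha, -⟩ | ⟨ha, -, -, -, hsc, -⟩
        · exact ⟨ha, hsc⟩
        · rw [ht] at ha; cases ha
        · exact ⟨ha, hsc⟩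
      -- facts from position j side (when right mark is a tail)
      have hright : w.mk1 j = tail →
          w.mk2 j = arrow ∧ G.Sc (w.vert j) (w.vert (j + 1)) := by
        intro ht
        have hwnc : ¬ w.IsCollider j := fun hc => by rw [hc.2.2.2] at ht; cases ht
        have hub := h.2 j (by omega) hjlt hwnc
        obtain ⟨-, -, hc⟩ := hub
        rcases hc with ⟨-, -, ha, -⟩ | ⟨-, -, ha, hsc⟩ | ⟨-, -, -, ha, -, hsc⟩
        · rw [ht] at ha; cases ha
        · exact ⟨ha, hsc⟩
        · exact ⟨ha, hsc⟩
      rcases hm2 : w.mk2 (k - 1) with _ | _ <;> rcases hm1 : w.mk1 j with _ | _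
      · -- tail, tail : case 3
        obtain ⟨hl1, hl2⟩ := hleft hm2
        obtain ⟨hr1, hr2⟩ := hright hm1
        refine ⟨hk0, hkn, Or.inr (Or.inr ?_)⟩
        refine ⟨by rw [excise_mk1_lt (by omega)]; exact hl1, by rw [em2]; exact hm2,
          by rw [em1]; exact hm1, by rw [em2']; exact hr1, ?_, ?_⟩
        · rw [evm, evl]; exact hl2
        · rw [evm, evr, hv]; exact hr2
      · -- tail, arrow : case 1
        obtain ⟨hl1, hl2⟩ := hleft hm2
        refine ⟨hk0, hkn, Or.inl ?_⟩
        refine ⟨by rw [excise_mk1_lt (by omega)]; exact hl1, by rw [em2]; exact hm2,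
          by rw [em1]; exact hm1, by rw [evm, evl]; exact hl2⟩
      · -- arrow, tail : case 2
        obtain ⟨hr1, hr2⟩ := hright hm1
        refine ⟨hk0, hkn, Or.inr (Or.inl ?_)⟩
        refine ⟨by rw [em2]; exact hm2, by rw [em1]; exact hm1, by rw [em2']; exact hr1, ?_⟩
        rw [evm, evr, hv]; exact hr2
      · -- arrow, arrow : collider, contradiction
        exact absurd ⟨hk0, hkn, by rw [em2]; exact hm2, by rw [em1]; exact hm1⟩ hnc
    · -- shifted suffix
      have hwnc : ¬ w.IsCollider (k + (j - i)) := by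
        intro hc
        refine hnc ⟨hk0, hkn, ?_, ?_⟩
        · rw [excise_mk2_ge (show i ≤ k - 1 by omega),
            show k - 1 + (j - i) = k + (j - i) - 1 by omega]
          exact hc.2.2.1
        · rw [excise_mk1_ge (by omega)]; exact hc.2.2.2
      have hub := h.2 (k + (j - i)) (by omega) (by omega) hwnc
      obtain ⟨-, -, hc⟩ := hub
      refine ⟨hk0, hkn, ?_⟩
      have e1 : w'.mk1 (k - 1) = w.mk1 (k + (j - i) - 1) := by
        rw [excise_mk1_ge (show i ≤ k - 1 by omega)]; congr 1; omega
      have e2 : w'.mk2 (k - 1) = w.mk2 (k + (j - i) - 1) := by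
        rw [excise_mk2_ge (show i ≤ k - 1 by omega)]; congr 1; omega
      have e3 : w'.mk1 k = w.mk1 (k + (j - i)) := excise_mk1_ge (by omega)
      have e4 : w'.mk2 k = w.mk2 (k + (j - i)) := excise_mk2_ge (by omega)
      have e5 : w'.vert (k - 1) = w.vert (k + (j - i) - 1) := by
        rw [excise_vert_ge (show i ≤ k - 1 by omega)]; congr 1; omega
      have e6 : w'.vert k = w.vert (k + (j - i)) := excise_vert_ge (by omega)
      have e7 : w'.vert (k + 1) = w.vert (k + (j - i) + 1) := by
        rw [excise_vert_ge (by omega)]; congr 1; omega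
      rw [e1, e2, e3, e4, e5, e6, e7]
      exact hc

/-- walk-to-path: from a relative σ-inducing walk extract a relative σ-inducing path. -/
lemma MixedGraph.RelInd.toPath {T : Set X} :
    ∀ (n : ℕ) (w : G.Walk n), G.RelInd T w →
      ∃ (m : ℕ) (p : G.Walk m), p.IsPath ∧ p.vert 0 = w.vert 0 ∧ p.vert m = w.vert n ∧
        G.RelInd T p := by
  intro n
  induction n using Nat.strong_induction_on with
  | _ n ih =>
    intro w hw
    by_cases hp : w.IsPath
    · exact ⟨n, w, hp, rfl, rfl, hw⟩
    · rw [MixedGraph.Walk.IsPath] at hp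
      push_neg at hp
      obtain ⟨i, j, hi, hj, hvij, hne⟩ := hp
      -- wlog i < j
      obtain ⟨i, j, hij, hjn, hvij⟩ :
          ∃ i j, i < j ∧ j ≤ n ∧ w.vert i = w.vert j := by
        rcases Nat.lt_or_ge i j with h | h
        · exact ⟨i, j, h, hj, hvij⟩
        · exact ⟨j, i, by omega, hi, hvij.symm⟩
      have hlt : n - (j - i) < n := by omega
      obtain ⟨m, p, hp, h0, hm, hrel⟩ :=
        ih (n - (j - i)) hlt (w.excise i j hij hjn hvij) (hw.excise hij hjn hvij)
      refine ⟨m, p, hp, ?_, ?_, hrel⟩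
      · rw [h0, MixedGraph.Walk.excise_vert_le (Nat.zero_le i)]
      · rw [hm, MixedGraph.Walk.excise_vert_ge (show i ≤ n - (j - i) by omega),
          show n - (j - i) + (j - i) = n by omega]

end Aux3
section Aux4

variable {X : Type*} {G : MixedGraph X}

open Mark

lemma MixedGraph.Walk.reverse_vert0 {n : ℕ} (w : G.Walk n) : w.reverse.vert 0 = w.vert n :=
  rfl

lemma MixedGraph.Walk.reverse_vertn {n : ℕ} (w : G.Walk n) : w.reverse.vert n = w.vert 0 := by
  show w.vert (n - n) = w.vert 0
  rw [Nat.sub_self]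

lemma MixedGraph.Walk.reverse_mk1_0 {n : ℕ} (w : G.Walk n) :
    w.reverse.mk1 0 = w.mk2 (n - 1) := rfl

lemma MixedGraph.Walk.reverse_mk2_last {n : ℕ} (w : G.Walk n) :
    w.reverse.mk2 (n - 1) = w.mk1 0 := by
  show w.mk1 (n - 1 - (n - 1)) = w.mk1 0
  rw [Nat.sub_self]

lemma MixedGraph.RelInd.reverse {T : Set X} {n : ℕ} {w : G.Walk n} (h : G.RelInd T w) :
    G.RelInd T w.reverse := by
  constructor
  · intro k hk
    obtain ⟨hk0, hkn, hm2, hm1⟩ := hk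
    have hm2' : w.mk1 (n - k) = arrow := by
      rw [show n - k = n - 1 - (k - 1) by omega]; exact hm2
    have hm1' : w.mk2 (n - k - 1) = arrow := by
      rw [show n - k - 1 = n - 1 - k by omega]; exact hm1
    exact h.1 (n - k) ⟨by omega, by omega, hm1', hm2'⟩
  · intro k hk0 hkn hnc
    have hwc : ¬ w.IsCollider (n - k) := by
      intro hc
      refine hnc ⟨hk0, hkn, ?_, ?_⟩
      · show w.mk1 (n - 1 - (k - 1)) = arrow
        rw [show n - 1 - (k - 1) = n - k by omega]; exact hc.2.2.2
      · show w.mk2 (n - 1 - k) = arrow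
        rw [show n - 1 - k = n - k - 1 by omega]; exact hc.2.2.1
    obtain ⟨-, -, hc⟩ := h.2 (n - k) (by omega) (by omega) hwc
    refine ⟨hk0, hkn, ?_⟩
    have e1 : n - 1 - (k - 1) = n - k := by omega
    have e2 : n - 1 - k = n - k - 1 := by omega
    have e3 : n - (k - 1) = n - k + 1 := by omega
    have e4 : n - (k + 1) = n - k - 1 := by omega
    show (w.mk2 (n - 1 - (k - 1)) = arrow ∧ w.mk1 (n - 1 - (k - 1)) = tail ∧
            w.mk2 (n - 1 - k) = arrow ∧ G.Sc (w.vert (n - k)) (w.vert (n - (k - 1)))) ∨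
         (w.mk1 (n - 1 - (k - 1)) = arrow ∧ w.mk2 (n - 1 - k) = tail ∧
            w.mk1 (n - 1 - k) = arrow ∧ G.Sc (w.vert (n - k)) (w.vert (n - (k + 1)))) ∨
         (w.mk2 (n - 1 - (k - 1)) = arrow ∧ w.mk1 (n - 1 - (k - 1)) = tail ∧
            w.mk2 (n - 1 - k) = tail ∧ w.mk1 (n - 1 - k) = arrow ∧
            G.Sc (w.vert (n - k)) (w.vert (n - (k - 1))) ∧
            G.Sc (w.vert (n - k)) (w.vert (n - (k + 1))))
    rw [e1, e2, e3, e4]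
    rcases hc with ⟨a1, a2, a3, a4⟩ | ⟨b1, b2, b3, b4⟩ | ⟨c1, c2, c3, c4, c5, c6⟩
    · exact Or.inr (Or.inl ⟨a3, a2, a1, a4⟩)
    · exact Or.inl ⟨b3, b2, b1, b4⟩
    · exact Or.inr (Or.inr ⟨c4, c3, c2, c1, c6, c5⟩)

lemma MixedGraph.RelInd.shift {T : Set X} {n : ℕ} {w : G.Walk n} (h : G.RelInd T w)
    (i m : ℕ) (him : i + m ≤ n) : G.RelInd T (w.shift i m him) := by
  constructor
  · intro k hk
    obtain ⟨hk0, hkn, hm2, hm1⟩ := hk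
    have hm2' : w.mk2 (i + k - 1) = arrow := by
      rw [show i + k - 1 = i + (k - 1) by omega]; exact hm2
    exact h.1 (i + k) ⟨by omega, by omega, hm2', hm1⟩
  · intro k hk0 hkn hnc
    have hwc : ¬ w.IsCollider (i + k) := by
      intro hc
      refine hnc ⟨hk0, hkn, ?_, hc.2.2.2⟩
      show w.mk2 (i + (k - 1)) = arrow
      rw [show i + (k - 1) = i + k - 1 by omega]; exact hc.2.2.1
    obtain ⟨-, -, hc⟩ := h.2 (i + k) (by omega) (by omega) hwc
    refine ⟨hk0, hkn, ?_⟩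
    have e1 : i + (k - 1) = i + k - 1 := by omega
    have e2 : i + (k + 1) = i + k + 1 := by omega
    show (w.mk1 (i + (k - 1)) = arrow ∧ w.mk2 (i + (k - 1)) = tail ∧ w.mk1 (i + k) = arrow ∧
            G.Sc (w.vert (i + k)) (w.vert (i + (k - 1)))) ∨
         (w.mk2 (i + (k - 1)) = arrow ∧ w.mk1 (i + k) = tail ∧ w.mk2 (i + k) = arrow ∧
            G.Sc (w.vert (i + k)) (w.vert (i + (k + 1)))) ∨
         (w.mk1 (i + (k - 1)) = arrow ∧ w.mk2 (i + (k - 1)) = tail ∧ w.mk1 (i + k) = tail ∧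
            w.mk2 (i + k) = arrow ∧ G.Sc (w.vert (i + k)) (w.vert (i + (k - 1))) ∧
            G.Sc (w.vert (i + k)) (w.vert (i + (k + 1))))
    rw [e1, e2]
    exact hc

/-- Concatenation of two walks sharing an endpoint. -/
def MixedGraph.Walk.append {m p : ℕ} (w1 : G.Walk m) (w2 : G.Walk p)
    (hj : w1.vert m = w2.vert 0) : G.Walk (m + p) where
  vert k := if k < m then w1.vert k else w2.vert (k - m)
  mk1 k := if k < m then w1.mk1 k else w2.mk1 (k - m)
  mk2 k := if k < m then w1.mk2 k else w2.mk2 (k - m)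
  valid k hk := by
    by_cases h1 : k + 1 < m
    · simp only [if_pos (show k < m by omega), if_pos h1]
      exact w1.valid k (by omega)
    · by_cases h2 : k < m
      · have hkm : k + 1 = m := by omega
        simp only [if_pos h2, if_neg h1]
        have := w1.valid k (by omega)
        rw [show k + 1 - m = 0 by omega, ← hj,
          show w1.vert m = w1.vert (k + 1) by rw [hkm]]
        exact this
      · simp only [if_neg h2, if_neg h1]
        have := w2.valid (k - m) (by omega)
        rwa [show k - m + 1 = k + 1 - m by omega] at this

namespace MixedGraph.Walk

variable {m p : ℕ} {w1 : G.Walk m} {w2 : G.Walk p} {hj : w1.vert m = w2.vert 0}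

lemma append_vert_le {k : ℕ} (hk : k ≤ m) : (w1.append w2 hj).vert k = w1.vert k := by
  by_cases h : k < m
  · exact if_pos h
  · show (if k < m then w1.vert k else w2.vert (k - m)) = w1.vert k
    rw [if_neg h, show k - m = 0 by omega, ← hj, show k = m by omega]

lemma append_vert_ge {k : ℕ} (hk : m ≤ k) : (w1.append w2 hj).vert k = w2.vert (k - m) :=
  if_neg (by omega)

lemma append_mk1_lt {k : ℕ} (hk : k < m) : (w1.append w2 hj).mk1 k = w1.mk1 k := if_pos hk

lemma append_mk1_ge {k : ℕ} (hk : m ≤ k) : (w1.append w2 hj).mk1 k = w2.mk1 (k - m) :=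
  if_neg (by omega)

lemma append_mk2_lt {k : ℕ} (hk : k < m) : (w1.append w2 hj).mk2 k = w1.mk2 k := if_pos hk

lemma append_mk2_ge {k : ℕ} (hk : m ≤ k) : (w1.append w2 hj).mk2 k = w2.mk2 (k - m) :=
  if_neg (by omega)

end MixedGraph.Walk

open MixedGraph.Walk in
lemma MixedGraph.RelInd.append {T : Set X} {m p : ℕ} {w1 : G.Walk m} {w2 : G.Walk p}
    {hj : w1.vert m = w2.vert 0} (h1 : G.RelInd T w1) (h2 : G.RelInd T w2)
    (hjunc : 0 < m → 0 < p →
      ((w1.append w2 hj).IsCollider m → G.AncS (w1.vert m) T) ∧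
      (¬ (w1.append w2 hj).IsCollider m → (w1.append w2 hj).Unblockable m)) :
    G.RelInd T (w1.append w2 hj) := by
  constructor
  · intro k hk
    obtain ⟨hk0, hkn, hm2, hm1⟩ := hk
    rcases lt_trichotomy k m with hkm | hkm | hkm
    · have hcol : w1.IsCollider k :=
        ⟨hk0, hkm, by rw [← append_mk2_lt (show k - 1 < m by omega)]; exact hm2,
         by rw [← append_mk1_lt hkm]; exact hm1⟩
      have := h1.1 k hcol
      rwa [← append_vert_le (le_of_lt hkm)] at this
    · subst hkm
      have := (hjunc (by omega) (by omega)).1 ⟨hk0, hkn, hm2, hm1⟩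
      rwa [← append_vert_le (le_refl k)] at this
    · have hcol : w2.IsCollider (k - m) :=
        ⟨by omega, by omega,
         by rw [show k - m - 1 = k - 1 - m by omega,
              ← append_mk2_ge (show m ≤ k - 1 by omega)]; exact hm2,
         by rw [← append_mk1_ge (le_of_lt hkm)]; exact hm1⟩
      have := h2.1 _ hcol
      rwa [← append_vert_ge (le_of_lt hkm)] at this
  · intro k hk0 hkn hnc
    rcases lt_trichotomy k m with hkm | hkm | hkm
    · have hwnc : ¬ w1.IsCollider k := by
        intro hc
        exact hnc ⟨hk0, hkn, by rw [append_mk2_lt (show k - 1 < m by omega)]; exact hc.2.2.1,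
          by rw [append_mk1_lt hkm]; exact hc.2.2.2⟩
      have hub := h1.2 k hk0 hkm hwnc
      exact hub.transfer hkn (append_vert_le (by omega)) (append_vert_le (by omega))
        (append_vert_le (by omega)) (append_mk1_lt (by omega)) (append_mk2_lt (by omega))
        (append_mk1_lt hkm) (append_mk2_lt hkm)
    · subst hkm
      exact (hjunc (by omega) (by omega)).2 hnc
    · have hwnc : ¬ w2.IsCollider (k - m) := by
        intro hc
        refine hnc ⟨hk0, hkn, ?_, ?_⟩
        · rw [append_mk2_ge (show m ≤ k - 1 by omega),
            show k - 1 - m = k - m - 1 by omega]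
          exact hc.2.2.1
        · rw [append_mk1_ge (by omega)]; exact hc.2.2.2
      have hub := h2.2 (k - m) (by omega) (by omega) hwnc
      obtain ⟨-, -, hc⟩ := hub
      refine ⟨hk0, hkn, ?_⟩
      have e1 : (w1.append w2 hj).mk1 (k - 1) = w2.mk1 (k - m - 1) := by
        rw [append_mk1_ge (show m ≤ k - 1 by omega)]; congr 1; omega
      have e2 : (w1.append w2 hj).mk2 (k - 1) = w2.mk2 (k - m - 1) := by
        rw [append_mk2_ge (show m ≤ k - 1 by omega)]; congr 1; omega
      have e3 : (w1.append w2 hj).mk1 k = w2.mk1 (k - m) := append_mk1_ge (by omega)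
      have e4 : (w1.append w2 hj).mk2 k = w2.mk2 (k - m) := append_mk2_ge (by omega)
      have e5 : (w1.append w2 hj).vert (k - 1) = w2.vert (k - m - 1) := by
        rw [append_vert_ge (show m ≤ k - 1 by omega)]; congr 1; omega
      have e6 : (w1.append w2 hj).vert k = w2.vert (k - m) := append_vert_ge (by omega)
      have e7 : (w1.append w2 hj).vert (k + 1) = w2.vert (k - m + 1) := by
        rw [append_vert_ge (by omega)]; congr 1; omega
      rw [e1, e2, e3, e4, e5, e6, e7]
      exact hc

end Aux4
section Aux5

variable {X : Type*} {G : MixedGraph X}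

open Mark MixedGraph.Walk

/-- Lemma A: a relative σ-inducing walk whose start is not an ancestor of `U` can be
modified to start with an arrowhead, keeping endpoints, the final mark and the
relative σ-inducing property. -/
lemma MixedGraph.RelInd.arrowify (hG : G.IsDMG) {U : Set X} {n : ℕ} {w : G.Walk n}
    (hrel : G.RelInd ({w.vert 0} ∪ U) w) (hU : ¬ G.AncS (w.vert 0) U)
    (hyU : w.vert n ∈ U) (hn : 0 < n) :
    ∃ (m : ℕ) (w' : G.Walk m), 0 < m ∧ w'.vert 0 = w.vert 0 ∧ w'.vert m = w.vert n ∧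
      G.RelInd ({w.vert 0} ∪ U) w' ∧ w'.mk1 0 = arrow ∧ w'.mk2 (m - 1) = w.mk2 (n - 1) := by
  classical
  rcases hmk : w.mk1 0 with _ | _
  swap
  · exact ⟨n, w, hn, rfl, rfl, hrel, hmk, rfl⟩
  -- first edge is directed out of the start
  obtain ⟨hmk2, hd⟩ : w.mk2 0 = arrow ∧ G.dir (w.vert 0) (w.vert 1) := by
    rcases hG.edge_cases (w.valid 0 hn) with ⟨-, h2, hdd⟩ | ⟨h1, -⟩ | ⟨h1, -⟩
    · exact ⟨h2, hdd⟩
    · rw [hmk] at h1; cases h1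
    · rw [hmk] at h1; cases h1
  -- directed chain before the first collider
  have chain : ∀ k, k ≤ n → (∀ q, 0 < q → q < k → ¬ w.IsCollider q) →
      ∀ q, q < k → G.dir (w.vert q) (w.vert (q + 1)) ∧ w.mk1 q = tail ∧ w.mk2 q = arrow := by
    intro k
    induction k with
    | zero => intro _ _ q hq; omega
    | succ k ihk =>
      intro hk hnc q hq
      by_cases hqk : q < k
      · exact ihk (by omega) (fun r h1 h2 => hnc r h1 (by omega)) q hqk
      · have hqe : q = k := by omega
        subst hqe
        by_cases hq0 : q = 0
        · subst hq0; exact ⟨hd, hmk, hmk2⟩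
        · have hprev := ihk (by omega) (fun r h1 h2 => hnc r h1 (by omega)) (q - 1) (by omega)
          have hqn : q < n := by omega
          have hwc : ¬ w.IsCollider q := hnc q (by omega) (by omega)
          obtain ⟨-, -, hc⟩ := hrel.2 q (by omega) hqn hwc
          have hprev2 : w.mk2 (q - 1) = arrow := hprev.2.2
          rcases hc with ⟨-, ht, -⟩ | ⟨-, h2t, h2a, -⟩ | ⟨-, ht, -⟩
          · rw [hprev2] at ht; cases ht
          · refine ⟨?_, h2t, h2a⟩
            rcases hG.edge_cases (w.valid q hqn) with ⟨-, -, hdd⟩ | ⟨ha, -⟩ | ⟨ha, -⟩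
            · exact hdd
            · rw [h2t] at ha; cases ha
            · rw [h2t] at ha; cases ha
          · rw [hprev2] at ht; cases ht
  -- there is a collider
  have hex : ∃ k, w.IsCollider k := by
    by_contra hno
    push_neg at hno
    have hch := chain n (le_refl n) (fun q _ _ => hno q)
    have hanc : G.Anc (w.vert 0) (w.vert n) :=
      MixedGraph.anc_of_chain' w.vert (fun p hp => (hch p hp).1) (Nat.zero_le n) (le_refl n)
    exact hU ⟨w.vert n, hyU, hanc⟩
  set m := Nat.find hex with hmdef
  have hmcol : w.IsCollider m := Nat.find_spec hex
  have hmin : ∀ q, q < m → ¬ w.IsCollider q := fun q hq => Nat.find_min hex hq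
  obtain ⟨hm0, hmn, hmc2, hmc1⟩ := hmcol
  have hch := chain m (by omega) (fun q _ h2 => hmin q h2)
  have hancxm : G.Anc (w.vert 0) (w.vert m) :=
    MixedGraph.anc_of_chain' w.vert (fun p hp => (hch p hp).1) (Nat.zero_le m) (le_refl m)
  have hancmx : G.Anc (w.vert m) (w.vert 0) := by
    obtain ⟨t, ht, hanc⟩ := hrel.1 m ⟨hm0, hmn, hmc2, hmc1⟩
    rcases ht with ht | ht
    · rw [Set.mem_singleton_iff] at ht
      rwa [ht] at hanc
    · exact absurd ⟨t, ht, hancxm.trans hanc⟩ hU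
  obtain ⟨d, D, hD0, hDd, hDdir, hDm1, hDm2⟩ := MixedGraph.exists_dirWalk hancmx
  have hDanc1 : ∀ q, q ≤ d → G.Anc (D.vert q) (w.vert 0) := by
    intro q hq
    have := MixedGraph.anc_of_chain' D.vert hDdir hq (le_refl d)
    rwa [hDd] at this
  have hDanc2 : ∀ q, q ≤ d → G.Anc (w.vert 0) (D.vert q) := by
    intro q hq
    have := MixedGraph.anc_of_chain' D.vert hDdir (Nat.zero_le q) hq
    rw [hD0] at this
    exact hancxm.trans this
  have hDrel : G.RelInd ({w.vert 0} ∪ U) D := by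
    constructor
    · intro q hq
      have := hq.2.2.2
      rw [hDm1 q] at this; cases this
    · intro q h1 h2 hnc
      refine ⟨h1, h2, Or.inr (Or.inl ⟨hDm2 _, hDm1 _, hDm2 _, ?_, ?_⟩)⟩
      · exact Relation.ReflTransGen.single (hDdir q h2)
      · exact (hDanc1 (q + 1) (by omega)).trans (hDanc2 q (by omega))
  have hws : m + (n - m) ≤ n := by omega
  set ws := w.shift m (n - m) hws with hwsdef
  have hwsrel : G.RelInd ({w.vert 0} ∪ U) ws := hrel.shift m (n - m) hws
  have hj : D.reverse.vert d = ws.vert 0 := by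
    rw [reverse_vertn, hD0]
    show w.vert m = w.vert (m + 0)
    rfl
  set w' := D.reverse.append ws hj with hw'def
  have hjunc : 0 < d → 0 < n - m →
      (w'.IsCollider d → G.AncS (D.reverse.vert d) ({w.vert 0} ∪ U)) ∧
      (¬ w'.IsCollider d → w'.Unblockable d) := by
    intro hd0 _
    have hm2d : w'.mk2 (d - 1) = tail := by
      rw [append_mk2_lt (show d - 1 < d by omega)]
      show D.mk1 (d - 1 - (d - 1)) = tail
      rw [Nat.sub_self]
      exact hDm1 0
    constructor
    · intro hcol
      have hcc := hcol.2.2.1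
      rw [hm2d] at hcc
      cases hcc
    · intro _
      refine ⟨hd0, by omega, Or.inl ⟨?_, hm2d, ?_, ?_⟩⟩
      · rw [append_mk1_lt (show d - 1 < d by omega)]
        show D.mk2 (d - 1 - (d - 1)) = arrow
        rw [Nat.sub_self]
        exact hDm2 0
      · rw [append_mk1_ge (le_refl d), Nat.sub_self]
        exact hmc1
      · have e1 : w'.vert d = w.vert m := by
          rw [append_vert_ge (le_refl d), Nat.sub_self, hwsdef]
          show w.vert (m + 0) = w.vert m
          rfl
        have e2 : w'.vert (d - 1) = D.vert 1 := by
          rw [append_vert_le (show d - 1 ≤ d by omega)]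
          show D.vert (d - (d - 1)) = D.vert 1
          rw [show d - (d - 1) = 1 by omega]
        rw [e1, e2]
        constructor
        · rw [← hD0]
          exact Relation.ReflTransGen.single (hDdir 0 hd0)
        · exact (hDanc1 1 (by omega)).trans hancxm
  have hrel' : G.RelInd ({w.vert 0} ∪ U) w' :=
    MixedGraph.RelInd.append hDrel.reverse hwsrel hjunc
  refine ⟨d + (n - m), w', by omega, ?_, ?_, hrel', ?_, ?_⟩
  · rw [append_vert_le (Nat.zero_le d), reverse_vert0, hDd]
  · rw [append_vert_ge (show d ≤ d + (n - m) by omega)]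
    show w.vert (m + (d + (n - m) - d)) = w.vert n
    congr 1
    omega
  · by_cases hd0 : 0 < d
    · rw [append_mk1_lt hd0, reverse_mk1_0]
      exact hDm2 (d - 1)
    · rw [append_mk1_ge (by omega)]
      show w.mk1 (m + (0 - d)) = arrow
      rw [show 0 - d = 0 by omega]
      show w.mk1 (m + 0) = arrow
      exact hmc1
  · rw [append_mk2_ge (show d ≤ d + (n - m) - 1 by omega)]
    show w.mk2 (m + (d + (n - m) - 1 - d)) = w.mk2 (n - 1)
    congr 1
    omega

end Aux5
section Main

variable {X : Type*} {G : MixedGraph X}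

open Mark MixedGraph.Walk

lemma MixedGraph.adj_of_edge {H : MixedGraph X} {x y : X} {m₁ m₂ : Mark}
    (h : H.EdgeMk x y m₁ m₂) : H.Adj x y := by
  cases m₁ <;> cases m₂ <;> simp only [MixedGraph.EdgeMk] at h
  · exact Or.inr (Or.inr (Or.inr h))
  · exact Or.inl h
  · exact Or.inr (Or.inl h)
  · exact Or.inr (Or.inr (Or.inl h))

end Main

open Mark MixedGraph.Walk

/-- If a mixed graph `H` represents a DMG `G` given `S` (where `S = (Set.range ι)ᶜ`),
then `H` is a σ-MAG. -/
theorem represents_implies_sigmaMAG {V W : Type*} (H : MixedGraph V) (G : MixedGraph W)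
    (ι : V → W) (hG : G.IsDMG) (hrep : Represents H G ι) :
    H.IsSigmaMAG := by
  classical
  obtain ⟨hinj, hself, hone, hadj, harr, htail⟩ := hrep
  set S' : Set W := (Set.range ι)ᶜ with hS'
  -- transitivity of "ancestor of {·} ∪ S'"
  have Rtrans : ∀ x y z : W, G.AncS x ({y} ∪ S') → G.AncS y ({z} ∪ S') →
      G.AncS x ({z} ∪ S') := by
    intro x y z ⟨t, ht, hxt⟩ h2
    rcases ht with ht | ht
    · rw [Set.mem_singleton_iff] at ht
      subst ht
      obtain ⟨t', ht', hyt'⟩ := h2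
      exact ⟨t', ht', hxt.trans hyt'⟩
    · exact ⟨t, Or.inr ht, hxt⟩
  -- H-ancestry transfers to G
  have HancR : ∀ u v : V, H.Anc u v → G.AncS (ι u) ({ι v} ∪ S') := by
    intro u v h
    induction h with
    | refl => exact ⟨ι u, Or.inl rfl, Relation.ReflTransGen.refl⟩
    | @tail p q h1 h2 ih =>
      exact Rtrans _ _ _ ih (htail p q (Or.inl h2))
  have hsetEq : ∀ u v : W, ({u, v} : Set W) ∪ S' = {u} ∪ ({v} ∪ S') := by
    intro u v
    ext t
    simp
    tauto
  have sigToRel : ∀ (m : ℕ) (P : G.Walk m), P.IsSigmaInducing S' →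
      G.RelInd ({P.vert 0} ∪ ({P.vert m} ∪ S')) P := by
    intro m P h
    refine ⟨fun k hk => (h.1 k hk).mono ?_, h.2⟩
    rw [hsetEq]
  have mkSig : ∀ (x y : W) (m : ℕ) (z : G.Walk m), z.vert 0 = x → z.vert m = y →
      G.RelInd ({x, y} ∪ S') z → G.SigmaInducingPath S' x y := by
    intro x y m z h0 hm hrel
    obtain ⟨m', q, hqpath, hq0, hqm, hqrel⟩ := MixedGraph.RelInd.toPath m z hrel
    have e0 : q.vert 0 = x := by rw [hq0, h0]
    have em : q.vert m' = y := by rw [hqm, hm]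
    refine ⟨m', q, hqpath, e0, em, fun k hk => ?_, hqrel.2⟩
    rw [e0, em]
    exact hqrel.1 k hk
  constructor
  · exact hself
  · exact hone
  · -- ancestral
    intro a b ⟨n, w, hpath, h0, hn, hmk⟩ harrow
    have key : ∀ k, k ≤ n → G.AncS (ι a) ({ι (w.vert k)} ∪ S') := by
      intro k
      induction k with
      | zero => intro _; rw [h0]; exact ⟨ι a, Or.inl rfl, Relation.ReflTransGen.refl⟩
      | succ k ih =>
        intro hk
        refine Rtrans _ (ι (w.vert k)) _ (ih (by omega)) ?_
        have hv := w.valid k (by omega)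
        rw [hmk k (by omega)] at hv
        refine htail _ _ ?_
        rcases hm2 : w.mk2 k with _ | _ <;> rw [hm2] at hv
        · exact Or.inr hv
        · exact Or.inl hv
    have := key n (le_refl n)
    rw [hn] at this
    exact harr a b harrow this
  · -- maximal
    intro a b hab hnadj ⟨n, w, hpath, h0, hn, hind⟩
    by_cases hn0 : n = 0
    · subst hn0
      exact hab (by rw [← h0]; exact hn)
    by_cases hn1 : n = 1
    · subst hn1
      apply hnadj
      have hA := MixedGraph.adj_of_edge (w.valid 0 (by omega))
      have h01 : w.vert (0 + 1) = b := hn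
      rwa [h0, h01] at hA
    have hn2 : 2 ≤ n := by omega
    set T : Set W := {ι a, ι b} ∪ S' with hT
    have liftT : ∀ k, k ≤ n → G.AncS (ι (w.vert k)) T := by
      intro k hk
      by_cases hk0 : k = 0
      · subst hk0; rw [h0]
        exact MixedGraph.ancS_of_mem (Or.inl (by simp))
      by_cases hkn : k = n
      · subst hkn; rw [hn]
        exact MixedGraph.ancS_of_mem (Or.inl (by simp))
      · obtain ⟨-, hanc⟩ := hind k (by omega) (by omega)
        have hsub1 : ∀ (u : V), u = a ∨ u = b → ({ι u} ∪ S') ⊆ T := by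
          rintro u (rfl | rfl) t ht <;>
            · simp only [Set.mem_union, Set.mem_singleton_iff] at ht
              rcases ht with rfl | ht
              · exact Or.inl (by simp)
              · exact Or.inr ht
        rcases hanc with hh | hh
        · have := HancR _ _ hh
          rw [h0] at this
          exact this.mono (hsub1 a (Or.inl rfl))
        · have := HancR _ _ hh
          rw [hn] at this
          exact this.mono (hsub1 b (Or.inr rfl))
    have hliftT : ∀ k₁ k₂, k₁ ≤ n → k₂ ≤ n → ∀ (p' : ℕ) (Q : G.Walk p'),
        G.RelInd ({ι (w.vert k₁)} ∪ ({ι (w.vert k₂)} ∪ S')) Q → G.RelInd T Q := by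
      intro k₁ k₂ h1 h2 p' Q h
      refine h.mono' ?_
      intro t ht
      simp only [Set.mem_union, Set.mem_singleton_iff] at ht
      rcases ht with rfl | rfl | ht
      · exact liftT k₁ h1
      · exact liftT k₂ h2
      · exact MixedGraph.ancS_of_mem (Or.inr ht)
    have harrAt : ∀ k, 0 < k → k < n →
        H.ArrowAt (w.vert k) (w.vert (k - 1)) ∧ H.ArrowAt (w.vert k) (w.vert (k + 1)) := by
      intro k h1 h2
      obtain ⟨⟨-, -, hc2, hc1⟩, -⟩ := hind k h1 h2
      constructor
      · have hv := w.valid (k - 1) (by omega)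
        rw [show k - 1 + 1 = k by omega] at hv
        rw [hc2] at hv
        rcases hm : w.mk1 (k - 1) with _ | _ <;> rw [hm] at hv
        · exact Or.inl hv
        · exact Or.inr (H.bidir_symm _ _ hv)
      · have hv := w.valid k h2
        rw [hc1] at hv
        rcases hm : w.mk2 k with _ | _ <;> rw [hm] at hv
        · exact Or.inl hv
        · exact Or.inr hv
    have piece : ∀ k, k < n → ∃ (p : ℕ) (P : G.Walk p), 0 < p ∧
        P.vert 0 = ι (w.vert k) ∧ P.vert p = ι (w.vert (k + 1)) ∧ G.RelInd T P ∧
        (0 < k → P.mk1 0 = arrow) ∧ (k + 1 < n → P.mk2 (p - 1) = arrow) := by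
      intro k hk
      have hne : w.vert k ≠ w.vert (k + 1) := fun he => by
        have := hpath k (k + 1) (by omega) (by omega) he; omega
      obtain ⟨p, P, hPpath, hP0, hPp, hPsig⟩ :=
        (hadj _ _ hne).mp (MixedGraph.adj_of_edge (w.valid k hk))
      have hp0 : 0 < p := by
        rcases Nat.eq_zero_or_pos p with h | h
        · exfalso
          subst h
          exact hne (hinj (by rw [← hP0, ← hPp]))
        · exact h
      have hPrel0 : G.RelInd ({P.vert 0} ∪ ({ι (w.vert (k + 1))} ∪ S')) P := by
        have := sigToRel p P hPsig
        rwa [hPp] at this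
      by_cases hk0 : 0 < k
      · -- arrowhead at the start
        have hUs : ¬ G.AncS (P.vert 0) ({ι (w.vert (k + 1))} ∪ S') := by
          rw [hP0]; exact harr _ _ (harrAt k hk0 hk).2
        have hyUs : P.vert p ∈ {ι (w.vert (k + 1))} ∪ S' := by
          rw [hPp]; exact Or.inl rfl
        obtain ⟨p₁, P₁, hp₁, e₁0, e₁p, hrel₁, hm₁, -⟩ :=
          MixedGraph.RelInd.arrowify hG hPrel0 hUs hyUs hp0
        by_cases hk1 : k + 1 < n
        · -- arrowhead at the end as well
          have ev : P₁.reverse.vert 0 = ι (w.vert (k + 1)) := by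
            rw [reverse_vert0, e₁p, hPp]
          have hset2 : ({P.vert 0} ∪ ({ι (w.vert (k + 1))} ∪ S')) =
              ({P₁.reverse.vert 0} ∪ ({ι (w.vert k)} ∪ S')) := by
            rw [ev, hP0]
            exact Set.union_left_comm _ _ _
          have hrev' : G.RelInd ({P₁.reverse.vert 0} ∪ ({ι (w.vert k)} ∪ S')) P₁.reverse :=
            hset2 ▸ hrel₁.reverse
          have hU2 : ¬ G.AncS (P₁.reverse.vert 0) ({ι (w.vert k)} ∪ S') := by
            rw [ev]; exact harr _ _ (harrAt (k + 1) (by omega) hk1).1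
          have hyU2 : P₁.reverse.vert p₁ ∈ {ι (w.vert k)} ∪ S' := by
            rw [reverse_vertn, e₁0, hP0]; exact Or.inl rfl
          obtain ⟨p₂, P₂, hp₂, e₂0, e₂p, hrel₂, hm₂, hm₂'⟩ :=
            MixedGraph.RelInd.arrowify hG hrev' hU2 hyU2 (by omega)
          refine ⟨p₂, P₂.reverse, hp₂, ?_, ?_, ?_, fun _ => ?_, fun _ => ?_⟩
          · rw [reverse_vert0, e₂p, reverse_vertn, e₁0, hP0]
          · rw [reverse_vertn, e₂0, ev]
          · refine hliftT (k + 1) k (by omega) (by omega) p₂ P₂.reverse ?_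
            have := hrel₂.reverse
            rwa [ev] at this
          · rw [reverse_mk1_0, hm₂', reverse_mk2_last]
            exact hm₁
          · rw [reverse_mk2_last]
            exact hm₂
        · -- k + 1 = n : no arrowhead needed at the end
          refine ⟨p₁, P₁, hp₁, by rw [e₁0, hP0], by rw [e₁p, hPp], ?_,
            fun _ => hm₁, fun h => absurd h hk1⟩
          refine hliftT k (k + 1) (by omega) (by omega) p₁ P₁ ?_
          rwa [hP0] at hrel₁
      · -- k = 0 : only an arrowhead at the end
        have hk1 : k + 1 < n := by omega
        have ev : P.reverse.vert 0 = ι (w.vert (k + 1)) := by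
          rw [reverse_vert0, hPp]
        have hset2 : ({P.vert 0} ∪ ({ι (w.vert (k + 1))} ∪ S')) =
            ({P.reverse.vert 0} ∪ ({ι (w.vert k)} ∪ S')) := by
          rw [ev, hP0]
          exact Set.union_left_comm _ _ _
        have hrev' : G.RelInd ({P.reverse.vert 0} ∪ ({ι (w.vert k)} ∪ S')) P.reverse :=
          hset2 ▸ hPrel0.reverse
        have hU2 : ¬ G.AncS (P.reverse.vert 0) ({ι (w.vert k)} ∪ S') := by
          rw [ev]; exact harr _ _ (harrAt (k + 1) (by omega) hk1).1
        have hyU2 : P.reverse.vert p ∈ {ι (w.vert k)} ∪ S' := by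
          rw [reverse_vertn, hP0]; exact Or.inl rfl
        obtain ⟨p₂, P₂, hp₂, e₂0, e₂p, hrel₂, hm₂, -⟩ :=
          MixedGraph.RelInd.arrowify hG hrev' hU2 hyU2 hp0
        refine ⟨p₂, P₂.reverse, hp₂, ?_, ?_, ?_, fun h => absurd h hk0, fun _ => ?_⟩
        · rw [reverse_vert0, e₂p, reverse_vertn, hP0]
        · rw [reverse_vertn, e₂0, ev]
        · refine hliftT (k + 1) k (by omega) (by omega) p₂ P₂.reverse ?_
          have := hrel₂.reverse
          rwa [ev] at this
        · rw [reverse_mk2_last]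
          exact hm₂
    -- chain the pieces together
    have claim : ∀ d, 0 < d → d ≤ n → ∃ (m : ℕ) (z : G.Walk m), 0 < m ∧
        z.vert 0 = ι (w.vert (n - d)) ∧ z.vert m = ι (w.vert n) ∧ G.RelInd T z ∧
        (0 < n - d → z.mk1 0 = arrow) := by
      intro d
      induction d with
      | zero => omega
      | succ d ihd =>
        intro _ hdn
        by_cases hd0 : d = 0
        · subst hd0
          obtain ⟨p, P, hp0, e0, ep, hrel, hm1, -⟩ := piece (n - 1) (by omega)
          exact ⟨p, P, hp0, by rw [e0], by rw [ep, show n - 1 + 1 = n by omega], hrel, hm1⟩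
        · obtain ⟨m, z, hm0, hz0, hzm, hzrel, hzmk⟩ := ihd (by omega) (by omega)
          obtain ⟨p, P, hp0, e0, ep, hrel, hm1, hm2⟩ := piece (n - (d + 1)) (by omega)
          have hj : P.vert p = z.vert 0 := by
            rw [ep, hz0, show n - d = n - (d + 1) + 1 by omega]
          refine ⟨p + m, P.append z hj, by omega, ?_, ?_, ?_, ?_⟩
          · rw [append_vert_le (Nat.zero_le p), e0]
          · rw [append_vert_ge (show p ≤ p + m by omega), show p + m - p = m by omega, hzm]
          · refine MixedGraph.RelInd.append hrel hzrel ?_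
            intro hpp hmm
            have hcolm : (P.append z hj).IsCollider p := by
              refine ⟨hpp, by omega, ?_, ?_⟩
              · rw [append_mk2_lt (show p - 1 < p by omega)]
                exact hm2 (by omega)
              · rw [append_mk1_ge (le_refl p), Nat.sub_self]
                exact hzmk (by omega)
            constructor
            · intro _
              rw [hj, hz0]
              exact liftT (n - d) (by omega)
            · intro hnc
              exact absurd hcolm hnc
          · intro h
            rw [append_mk1_lt hp0]
            exact hm1 (by omega)
    obtain ⟨m, z, -, hz0, hzm, hzrel, -⟩ := claim n (by omega) (le_refl n)
    have hz0' : z.vert 0 = ι a := by rw [hz0, Nat.sub_self, h0]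
    have hzm' : z.vert m = ι b := by rw [hzm, hn]
    exact hnadj ((hadj a b hab).mpr (mkSig (ι a) (ι b) m z hz0' hzm' hzrel))
  · -- σ-complete part 1
    intro a b c hArr hund
    have hba : b ≠ a := by
      rintro rfl
      rcases hArr with h | h
      · exact (hself b).1 h
      · exact (hself b).2.1 h
    have hbc : b ≠ c := by
      rintro rfl
      exact (hself b).2.2 hund
    have hac : a ≠ c := by
      rintro rfl
      rcases hArr with h | h
      · exact ((hone a b).1 h).2.2 (H.undir_symm _ _ hund)
      · exact ((hone b a).2 h) hund
    have hnb : ¬ G.AncS (ι b) ({ι a} ∪ S') := harr b a hArr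
    have hnbS : ∀ s, s ∈ S' → ¬ G.Anc (ι b) s := fun s hs h => hnb ⟨s, Or.inr hs, h⟩
    have hbcanc : G.Anc (ι b) (ι c) := by
      obtain ⟨t, ht, h⟩ := htail b c (Or.inr hund)
      rcases ht with ht | ht
      · rw [Set.mem_singleton_iff] at ht; rwa [ht] at h
      · exact absurd h (hnbS t ht)
    have hcbanc : G.Anc (ι c) (ι b) := by
      obtain ⟨t, ht, h⟩ := htail c b (Or.inr (H.undir_symm _ _ hund))
      rcases ht with ht | ht
      · rw [Set.mem_singleton_iff] at ht; rwa [ht] at h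
      · exact absurd (hbcanc.trans h) (hnbS t ht)
    have hAdjba : H.Adj b a := by
      rcases hArr with h | h
      · exact Or.inr (Or.inl h)
      · exact Or.inr (Or.inr (Or.inl h))
    obtain ⟨p, P, hPpath, hP0, hPp, hPsig⟩ := (hadj b a hba).mp hAdjba
    have hp0 : 0 < p := by
      rcases Nat.eq_zero_or_pos p with h | h
      · exfalso; subst h; exact hba (hinj (by rw [← hP0, ← hPp]))
      · exact h
    have hPrel0 : G.RelInd ({P.vert 0} ∪ ({ι a} ∪ S')) P := by
      have := sigToRel p P hPsig
      rwa [hPp] at this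
    have hUs : ¬ G.AncS (P.vert 0) ({ι a} ∪ S') := by rw [hP0]; exact hnb
    have hyUs : P.vert p ∈ {ι a} ∪ S' := by rw [hPp]; exact Or.inl rfl
    obtain ⟨p₁, P₁, hp₁, e₁0, e₁p, hrel₁, hm₁, -⟩ :=
      MixedGraph.RelInd.arrowify hG hPrel0 hUs hyUs hp0
    have e₂0 : P₁.reverse.vert 0 = ι a := by rw [reverse_vert0, e₁p, hPp]
    have e₂p : P₁.reverse.vert p₁ = ι b := by rw [reverse_vertn, e₁0, hP0]
    have hm₂ : P₁.reverse.mk2 (p₁ - 1) = arrow := by rw [reverse_mk2_last]; exact hm₁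
    obtain ⟨dd, D, hD0, hDd, hDdir, hDm1, hDm2⟩ := MixedGraph.exists_dirWalk hbcanc
    have hd0 : 0 < dd := by
      rcases Nat.eq_zero_or_pos dd with h | h
      · exfalso; subst h; exact hbc (hinj (by rw [← hD0, ← hDd]))
      · exact h
    have hDanc1 : ∀ q, q ≤ dd → G.Anc (D.vert q) (ι b) := by
      intro q hq
      have := MixedGraph.anc_of_chain' D.vert hDdir hq (le_refl dd)
      rw [hDd] at this
      exact this.trans hcbanc
    have hDanc2 : ∀ q, q ≤ dd → G.Anc (ι b) (D.vert q) := by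
      intro q hq
      have := MixedGraph.anc_of_chain' D.vert hDdir (Nat.zero_le q) hq
      rwa [hD0] at this
    have hDrel : G.RelInd ({ι a, ι c} ∪ S') D := by
      constructor
      · intro q hq
        have := hq.2.2.2
        rw [hDm1 q] at this
        cases this
      · intro q h1 h2 hnc
        refine ⟨h1, h2, Or.inr (Or.inl ⟨hDm2 _, hDm1 _, hDm2 _, ?_, ?_⟩)⟩
        · exact Relation.ReflTransGen.single (hDdir q h2)
        · exact (hDanc1 (q + 1) (by omega)).trans (hDanc2 q (by omega))
    have hrel₂' : G.RelInd ({ι a, ι c} ∪ S') P₁.reverse := by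
      refine hrel₁.reverse.mono' ?_
      intro t ht
      simp only [Set.mem_union, Set.mem_singleton_iff] at ht
      rcases ht with rfl | rfl | ht
      · rw [hP0]
        exact ⟨ι c, Or.inl (by simp), hbcanc⟩
      · exact MixedGraph.ancS_of_mem (Or.inl (by simp))
      · exact MixedGraph.ancS_of_mem (Or.inr ht)
    have hj : P₁.reverse.vert p₁ = D.vert 0 := by rw [e₂p, hD0]
    have hjunc : 0 < p₁ → 0 < dd →
        ((P₁.reverse.append D hj).IsCollider p₁ → G.AncS (P₁.reverse.vert p₁) ({ι a, ι c} ∪ S')) ∧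
        (¬ (P₁.reverse.append D hj).IsCollider p₁ → (P₁.reverse.append D hj).Unblockable p₁) := by
      intro _ _
      constructor
      · intro hcol
        have hx := hcol.2.2.2
        rw [append_mk1_ge (le_refl p₁), Nat.sub_self, hDm1 0] at hx
        cases hx
      · intro _
        refine ⟨hp₁, by omega, Or.inr (Or.inl ⟨?_, ?_, ?_, ?_⟩)⟩
        · rw [append_mk2_lt (show p₁ - 1 < p₁ by omega)]
          exact hm₂
        · rw [append_mk1_ge (le_refl p₁), Nat.sub_self]
          exact hDm1 0
        · rw [append_mk2_ge (le_refl p₁), Nat.sub_self]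
          exact hDm2 0
        · have ev1 : (P₁.reverse.append D hj).vert p₁ = ι b := by
            rw [append_vert_le (le_refl p₁), e₂p]
          have ev2 : (P₁.reverse.append D hj).vert (p₁ + 1) = D.vert 1 := by
            rw [append_vert_ge (by omega), show p₁ + 1 - p₁ = 1 by omega]
          rw [ev1, ev2]
          exact ⟨hDanc2 1 (by omega), hDanc1 1 (by omega)⟩
    have hzrel : G.RelInd ({ι a, ι c} ∪ S') (P₁.reverse.append D hj) :=
      MixedGraph.RelInd.append hrel₂' hDrel hjunc
    have hz0 : (P₁.reverse.append D hj).vert 0 = ι a := by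
      rw [append_vert_le (Nat.zero_le p₁), e₂0]
    have hzm : (P₁.reverse.append D hj).vert (p₁ + dd) = ι c := by
      rw [append_vert_ge (show p₁ ≤ p₁ + dd by omega), show p₁ + dd - p₁ = dd by omega, hDd]
    exact (hadj a c hac).mpr (mkSig (ι a) (ι c) _ _ hz0 hzm hzrel)
  · -- σ-complete part 2
    intro a b c d hArr hundc hundd hcd
    have hnb : ¬ G.AncS (ι b) ({ι a} ∪ S') := harr b a hArr
    have hnbS : ∀ s, s ∈ S' → ¬ G.Anc (ι b) s := fun s hs h => hnb ⟨s, Or.inr hs, h⟩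
    have hanc1 : ∀ x : V, H.undir b x → G.Anc (ι b) (ι x) ∧ G.Anc (ι x) (ι b) := by
      intro x hx
      have hbx : G.Anc (ι b) (ι x) := by
        obtain ⟨t, ht, h⟩ := htail b x (Or.inr hx)
        rcases ht with ht | ht
        · rw [Set.mem_singleton_iff] at ht; rwa [ht] at h
        · exact absurd h (hnbS t ht)
      refine ⟨hbx, ?_⟩
      obtain ⟨t, ht, h⟩ := htail x b (Or.inr (H.undir_symm _ _ hx))
      rcases ht with ht | ht
      · rw [Set.mem_singleton_iff] at ht; rwa [ht] at h
      · exact absurd (hbx.trans h) (hnbS t ht)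
    obtain ⟨hbc1, hbc2⟩ := hanc1 c hundc
    obtain ⟨hbd1, hbd2⟩ := hanc1 d hundd
    have hcd1 : G.Anc (ι c) (ι d) := hbc2.trans hbd1
    have hcd2 : G.Anc (ι d) (ι c) := hbd2.trans hbc1
    obtain ⟨dd, D, hD0, hDd, hDdir, hDm1, hDm2⟩ := MixedGraph.exists_dirWalk hcd1
    have hDanc1 : ∀ q, q ≤ dd → G.Anc (D.vert q) (ι c) := by
      intro q hq
      have := MixedGraph.anc_of_chain' D.vert hDdir hq (le_refl dd)
      rw [hDd] at this
      exact this.trans hcd2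
    have hDanc2 : ∀ q, q ≤ dd → G.Anc (ι c) (D.vert q) := by
      intro q hq
      have := MixedGraph.anc_of_chain' D.vert hDdir (Nat.zero_le q) hq
      rwa [hD0] at this
    have hDrel : G.RelInd ({ι c, ι d} ∪ S') D := by
      constructor
      · intro q hq
        have := hq.2.2.2
        rw [hDm1 q] at this
        cases this
      · intro q h1 h2 hnc
        refine ⟨h1, h2, Or.inr (Or.inl ⟨hDm2 _, hDm1 _, hDm2 _, ?_, ?_⟩)⟩
        · exact Relation.ReflTransGen.single (hDdir q h2)
        · exact (hDanc1 (q + 1) (by omega)).trans (hDanc2 q (by omega))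
    exact (hadj c d hcd).mpr (mkSig (ι c) (ι d) dd D hD0 hDd hDrel)
end

section
/- Let H be a σ-MAG, let Z ⊆ V be a set of nodes, and let a, b ∈ V. Then there exists a walk between a and b in H that is m-open given Z if and only if there exists a path between a and b in H that is m-open given Z. -/
variable {V : Type*}

namespace MOpenProof

variable {V : Type*} {G : MixedGraph V}

lemma mark_cases (m : Mark) : m = Mark.tail ∨ m = Mark.arrow := by
  cases m
  · exact Or.inl rfl
  · exact Or.inr rfl

lemma arrowAt_snd {x y : V} {m : Mark} (h : G.EdgeMk x y m Mark.arrow) : G.ArrowAt y x := by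
  cases m
  · exact Or.inl h
  · exact Or.inr (G.bidir_symm _ _ h)

lemma arrowAt_fst {x y : V} {m : Mark} (h : G.EdgeMk x y Mark.arrow m) : G.ArrowAt x y := by
  cases m
  · exact Or.inl h
  · exact Or.inr h

lemma edge_of_adj {x y : V} (h : G.Adj x y) : ∃ m₁ m₂, G.EdgeMk x y m₁ m₂ := by
  rcases h with h | h | h | h
  · exact ⟨Mark.tail, Mark.arrow, h⟩
  · exact ⟨Mark.arrow, Mark.tail, h⟩
  · exact ⟨Mark.arrow, Mark.arrow, h⟩
  · exact ⟨Mark.tail, Mark.tail, h⟩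

lemma adj_symm {x y : V} (h : G.Adj x y) : G.Adj y x := by
  rcases h with h | h | h | h
  · exact Or.inr (Or.inl h)
  · exact Or.inl h
  · exact Or.inr (Or.inr (Or.inl (G.bidir_symm _ _ h)))
  · exact Or.inr (Or.inr (Or.inr (G.undir_symm _ _ h)))

lemma ancS_head {a b : V} {Z : Set V} (h : G.dir a b) (h2 : G.AncS b Z) : G.AncS a Z := by
  obtain ⟨z, hz, hanc⟩ := h2
  exact ⟨z, hz, Relation.ReflTransGen.head h hanc⟩

lemma ancS_anc {a b : V} {Z : Set V} (h : G.Anc a b) (h2 : G.AncS b Z) : G.AncS a Z := by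
  obtain ⟨z, hz, hanc⟩ := h2
  exact ⟨z, hz, h.trans hanc⟩

/-! ### Walk constructors -/

def consWalk {n : ℕ} (w : G.Walk n) (a : V) (m₁ m₂ : Mark)
    (h : G.EdgeMk a (w.vert 0) m₁ m₂) : G.Walk (n + 1) where
  vert k := if k = 0 then a else w.vert (k - 1)
  mk1 k := if k = 0 then m₁ else w.mk1 (k - 1)
  mk2 k := if k = 0 then m₂ else w.mk2 (k - 1)
  valid i hi := by
    rcases Nat.eq_zero_or_pos i with h0 | h0
    · subst h0
      simpa using h
    · have h1 : i ≠ 0 := by omega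
      have h2 : i + 1 ≠ 0 := by omega
      have h3 : i + 1 - 1 = (i - 1) + 1 := by omega
      simp only [if_neg h1, if_neg h2, h3]
      exact w.valid (i - 1) (by omega)

def singleWalk {x y : V} (m₁ m₂ : Mark) (h : G.EdgeMk x y m₁ m₂) : G.Walk 1 where
  vert k := if k = 0 then x else y
  mk1 _ := m₁
  mk2 _ := m₂
  valid i hi := by
    have h0 : i = 0 := by omega
    subst h0
    simpa using h

def dropWalk {n : ℕ} (w : G.Walk n) (l r : ℕ) (hlr : l ≤ r) (hrn : r ≤ n)
    (hv : w.vert l = w.vert r) : G.Walk (n - (r - l)) where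
  vert k := if k ≤ l then w.vert k else w.vert (k + (r - l))
  mk1 k := if k < l then w.mk1 k else w.mk1 (k + (r - l))
  mk2 k := if k < l then w.mk2 k else w.mk2 (k + (r - l))
  valid i hi := by
    by_cases hil : i < l
    · have h1 : i ≤ l := le_of_lt hil
      have h2 : i + 1 ≤ l := hil
      simp only [if_pos h1, if_pos h2, if_pos hil]
      exact w.valid i (by omega)
    · have h2 : ¬ (i + 1 ≤ l) := by omega
      have h3 : i + 1 + (r - l) = (i + (r - l)) + 1 := by omega
      simp only [if_neg hil, if_neg h2, h3]
      have hva : (if i ≤ l then w.vert i else w.vert (i + (r - l))) = w.vert (i + (r - l)) := by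
        by_cases hiel : i ≤ l
        · have hieq : i = l := by omega
          subst hieq
          have h4 : i + (r - i) = r := by omega
          rw [if_pos hiel, h4, hv]
        · rw [if_neg hiel]
      rw [hva]
      exact w.valid (i + (r - l)) (by omega)

def spliceWalk {n : ℕ} (w : G.Walk n) (l r : ℕ) (μ ν : Mark) (hlr : l < r) (hrn : r ≤ n)
    (he : G.EdgeMk (w.vert l) (w.vert r) μ ν) : G.Walk (l + 1 + (n - r)) where
  vert k := if k ≤ l then w.vert k else w.vert (k + (r - l - 1))
  mk1 k := if k < l then w.mk1 k else if k = l then μ else w.mk1 (k + (r - l - 1))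
  mk2 k := if k < l then w.mk2 k else if k = l then ν else w.mk2 (k + (r - l - 1))
  valid i hi := by
    rcases lt_trichotomy i l with h | h | h
    · have h1 : i ≤ l := le_of_lt h
      have h2 : i + 1 ≤ l := h
      simp only [if_pos h1, if_pos h2, if_pos h]
      exact w.valid i (by omega)
    · subst h
      have h1 : ¬ (i + 1 ≤ i) := by omega
      have h2 : ¬ (i < i) := lt_irrefl i
      have h3 : i + 1 + (r - i - 1) = r := by omega
      simp only [if_pos (le_refl i), if_neg h1, if_neg h2, if_pos rfl, h3]
      exact he
    · have h1 : ¬ (i ≤ l) := by omega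
      have h2 : ¬ (i + 1 ≤ l) := by omega
      have h3 : ¬ (i < l) := by omega
      have h4 : i ≠ l := by omega
      have h5 : i + 1 + (r - l - 1) = (i + (r - l - 1)) + 1 := by omega
      simp only [if_neg h1, if_neg h2, if_neg h3, if_neg h4, h5]
      exact w.valid (i + (r - l - 1)) (by omega)

/-! ### accessor lemmas -/

lemma drop_vert {n : ℕ} (w : G.Walk n) (l r : ℕ) (hlr : l ≤ r) (hrn : r ≤ n)
    (hv : w.vert l = w.vert r) (k : ℕ) :
    (dropWalk w l r hlr hrn hv).vert k = if k ≤ l then w.vert k else w.vert (k + (r - l)) := rfl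

lemma drop_mk1 {n : ℕ} (w : G.Walk n) (l r : ℕ) (hlr : l ≤ r) (hrn : r ≤ n)
    (hv : w.vert l = w.vert r) (k : ℕ) :
    (dropWalk w l r hlr hrn hv).mk1 k = if k < l then w.mk1 k else w.mk1 (k + (r - l)) := rfl

lemma drop_mk2 {n : ℕ} (w : G.Walk n) (l r : ℕ) (hlr : l ≤ r) (hrn : r ≤ n)
    (hv : w.vert l = w.vert r) (k : ℕ) :
    (dropWalk w l r hlr hrn hv).mk2 k = if k < l then w.mk2 k else w.mk2 (k + (r - l)) := rfl

lemma drop_vert_last {n : ℕ} (w : G.Walk n) {l r : ℕ} (hlr : l ≤ r) (hrn : r ≤ n)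
    (hv : w.vert l = w.vert r) :
    (dropWalk w l r hlr hrn hv).vert (n - (r - l)) = w.vert n := by
  rw [drop_vert]
  by_cases h : n - (r - l) ≤ l
  · have hrn' : r = n := by omega
    have h3 : n - (r - l) = l := by omega
    rw [if_pos h, h3, hv, hrn']
  · rw [if_neg h]
    congr 1
    omega

lemma splice_vert {n : ℕ} (w : G.Walk n) (l r : ℕ) (μ ν : Mark) (hlr : l < r) (hrn : r ≤ n)
    (he : G.EdgeMk (w.vert l) (w.vert r) μ ν) (k : ℕ) :
    (spliceWalk w l r μ ν hlr hrn he).vert k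
      = if k ≤ l then w.vert k else w.vert (k + (r - l - 1)) := rfl

lemma splice_mk1 {n : ℕ} (w : G.Walk n) (l r : ℕ) (μ ν : Mark) (hlr : l < r) (hrn : r ≤ n)
    (he : G.EdgeMk (w.vert l) (w.vert r) μ ν) (k : ℕ) :
    (spliceWalk w l r μ ν hlr hrn he).mk1 k
      = if k < l then w.mk1 k else if k = l then μ else w.mk1 (k + (r - l - 1)) := rfl

lemma splice_mk2 {n : ℕ} (w : G.Walk n) (l r : ℕ) (μ ν : Mark) (hlr : l < r) (hrn : r ≤ n)
    (he : G.EdgeMk (w.vert l) (w.vert r) μ ν) (k : ℕ) :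
    (spliceWalk w l r μ ν hlr hrn he).mk2 k
      = if k < l then w.mk2 k else if k = l then ν else w.mk2 (k + (r - l - 1)) := rfl

lemma splice_vert_last {n : ℕ} (w : G.Walk n) {l r : ℕ} (μ ν : Mark) (hlr : l < r) (hrn : r ≤ n)
    (he : G.EdgeMk (w.vert l) (w.vert r) μ ν) :
    (spliceWalk w l r μ ν hlr hrn he).vert (l + 1 + (n - r)) = w.vert n := by
  rw [splice_vert, if_neg (by omega)]
  congr 1
  omega

/-! ### Anterior walks -/

def AntWalk (G : MixedGraph V) (a b : V) : Prop :=
  ∃ (n : ℕ) (w : G.Walk n), w.vert 0 = a ∧ w.vert n = b ∧ ∀ i < n, w.mk1 i = Mark.tail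

lemma antWalk_single {x y : V} {m₂ : Mark} (h : G.EdgeMk x y Mark.tail m₂) : AntWalk G x y := by
  refine ⟨1, singleWalk _ _ h, ?_, ?_, ?_⟩
  · simp [singleWalk]
  · simp [singleWalk]
  · intro i _
    rfl

lemma antWalk_cons {x y c : V} {m₂ : Mark} (h : G.EdgeMk x y Mark.tail m₂)
    (h2 : AntWalk G y c) : AntWalk G x c := by
  obtain ⟨m, u, h0, hm, ht⟩ := h2
  have h' : G.EdgeMk x (u.vert 0) Mark.tail m₂ := by rw [h0]; exact h
  refine ⟨m + 1, consWalk u x Mark.tail m₂ h', ?_, ?_, ?_⟩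
  · rfl
  · show (if m + 1 = 0 then x else u.vert (m + 1 - 1)) = c
    rw [if_neg (by omega)]
    simpa using hm
  · intro i hi
    show (if i = 0 then Mark.tail else u.mk1 (i - 1)) = Mark.tail
    by_cases h0' : i = 0
    · rw [if_pos h0']
    · rw [if_neg h0']
      exact ht (i - 1) (by omega)

lemma antWalk_anterior' {a b : V} : ∀ (N : ℕ) (u : G.Walk N), u.vert 0 = a → u.vert N = b →
    (∀ i < N, u.mk1 i = Mark.tail) → G.AnteriorPath a b := by
  intro N
  induction N using Nat.strong_induction_on with
  | _ N ih =>
    intro u h0 hN ht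
    by_cases hp : u.IsPath
    · exact ⟨N, u, hp, h0, hN, ht⟩
    · unfold MixedGraph.Walk.IsPath at hp
      push_neg at hp
      obtain ⟨i, j, hi, hj, hv, hne⟩ := hp
      have main : ∀ i j, i < j → j ≤ N → u.vert i = u.vert j → G.AnteriorPath a b := by
        intro i j hij hjN hv
        refine ih (N - (j - i)) (by omega) (dropWalk u i j (le_of_lt hij) hjN hv) ?_ ?_ ?_
        · rw [drop_vert, if_pos (Nat.zero_le i)]
          exact h0
        · rw [drop_vert_last]
          exact hN
        · intro k hk
          rw [drop_mk1]
          by_cases hkl : k < i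
          · rw [if_pos hkl]
            exact ht k (by omega)
          · rw [if_neg hkl]
            exact ht _ (by omega)
      rcases lt_or_gt_of_ne hne with h | h
      · exact main i j h hj hv
      · exact main j i h hi hv.symm

lemma antWalk_anterior {a b : V} (h : AntWalk G a b) : G.AnteriorPath a b := by
  obtain ⟨N, u, h0, hN, ht⟩ := h
  exact antWalk_anterior' N u h0 hN ht

/-! ### The push lemma -/

lemma push {n : ℕ} {Z : Set V} {w : G.Walk n} (hw : w.MOpen Z) {s : ℕ}
    (hs : w.mk2 s = Mark.arrow) :
    ∀ t, s < t → t ≤ n →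
    (∃ k, s < k ∧ k < t ∧ w.IsCollider k ∧ G.Anc (w.vert (s + 1)) (w.vert k)) ∨
    (G.Anc (w.vert (s + 1)) (w.vert t) ∧ w.mk2 (t - 1) = Mark.arrow) := by
  intro t hst
  induction t, hst using Nat.le_induction with
  | base =>
    intro _
    exact Or.inr ⟨Relation.ReflTransGen.refl, by simpa using hs⟩
  | succ t ht ih =>
    intro htn
    rcases ih (by omega) with ⟨k, hk1, hk2, hk3, hk4⟩ | ⟨hanc, harr⟩
    · exact Or.inl ⟨k, hk1, by omega, hk3, hk4⟩
    · have ht0 : 0 < t := by omega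
      have htn' : t < n := by omega
      by_cases hc : w.IsCollider t
      · exact Or.inl ⟨t, by omega, by omega, hc, hanc⟩
      · have hmk1 : w.mk1 t = Mark.tail := by
          rcases mark_cases (w.mk1 t) with h | h
          · exact h
          · exact absurd ⟨ht0, htn', harr, h⟩ hc
        have hf := (hw.2.2 t ht0 htn').1
        have hmk2 : w.mk2 t = Mark.arrow := by
          rcases mark_cases (w.mk2 t) with h | h
          · exact absurd ⟨harr, hmk1, h⟩ hf
          · exact h
        have hd : G.dir (w.vert t) (w.vert (t + 1)) := by
          have hval := w.valid t htn'
          rw [hmk1, hmk2] at hval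
          exact hval
        exact Or.inr ⟨hanc.tail hd, by simpa using hmk2⟩

lemma push_ancS {n : ℕ} {Z : Set V} {w : G.Walk n} (hw : w.MOpen Z) {s t : ℕ}
    (hs : w.mk2 s = Mark.arrow) (hst : s < t) (htn : t ≤ n)
    (htl : w.mk2 (t - 1) = Mark.tail) : G.AncS (w.vert (s + 1)) Z := by
  rcases push hw hs t hst htn with ⟨k, _, _, hc, hanc⟩ | ⟨_, harr⟩
  · exact ancS_anc hanc (hw.2.1 k hc)
  · rw [htl] at harr
    cases harr

/-! ### Reverse preserves m-openness -/

lemma reverse_vert {n : ℕ} (w : G.Walk n) (k : ℕ) : w.reverse.vert k = w.vert (n - k) := rfl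

lemma reverse_mk1 {n : ℕ} (w : G.Walk n) (k : ℕ) : w.reverse.mk1 k = w.mk2 (n - 1 - k) := rfl

lemma reverse_mk2 {n : ℕ} (w : G.Walk n) (k : ℕ) : w.reverse.mk2 k = w.mk1 (n - 1 - k) := rfl

lemma reverse_collider {n : ℕ} {w : G.Walk n} {k : ℕ} (hk : k ≤ n) :
    w.reverse.IsCollider k ↔ w.IsCollider (n - k) := by
  constructor
  · rintro ⟨h1, h2, h3, h4⟩
    rw [reverse_mk1] at h4
    rw [reverse_mk2] at h3
    have e1 : n - 1 - (k - 1) = n - k := by omega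
    have e2 : n - 1 - k = n - k - 1 := by omega
    rw [e1] at h3
    rw [e2] at h4
    exact ⟨by omega, by omega, h4, h3⟩
  · rintro ⟨h1, h2, h3, h4⟩
    refine ⟨by omega, by omega, ?_, ?_⟩
    · rw [reverse_mk2]
      have e1 : n - 1 - (k - 1) = n - k := by omega
      rw [e1]
      exact h4
    · rw [reverse_mk1]
      have e2 : n - 1 - k = n - k - 1 := by omega
      rw [e2]
      exact h3

lemma reverse_mopen {n : ℕ} {Z : Set V} {w : G.Walk n} (hw : w.MOpen Z) :
    w.reverse.MOpen Z := by
  refine ⟨?_, ?_, ?_⟩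
  · intro k hk hnc
    rw [reverse_vert]
    refine hw.1 (n - k) (by omega) ?_
    intro hc
    exact hnc ((reverse_collider hk).mpr hc)
  · intro k hc
    have hk : k ≤ n := le_of_lt hc.2.1
    rw [reverse_vert]
    exact hw.2.1 (n - k) ((reverse_collider hk).mp hc)
  · intro k hk0 hkn
    have h := hw.2.2 (n - k) (by omega) (by omega)
    constructor
    · rintro ⟨h1, h2, h3⟩
      rw [reverse_mk2] at h1 h3
      rw [reverse_mk1] at h2
      have e1 : n - 1 - (k - 1) = n - k := by omega
      have e2 : n - 1 - k = n - k - 1 := by omega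
      rw [e1] at h1
      rw [e2] at h2 h3
      exact h.2 ⟨h3, h2, h1⟩
    · rintro ⟨h1, h2, h3⟩
      rw [reverse_mk1] at h1 h3
      rw [reverse_mk2] at h2
      have e1 : n - 1 - (k - 1) = n - k := by omega
      have e2 : n - 1 - k = n - k - 1 := by omega
      rw [e1] at h1 h2
      rw [e2] at h3
      exact h.1 ⟨h3, h2, h1⟩
  

end MOpenProof
namespace MOpenProof

variable {V : Type*} {G : MixedGraph V}

/-- Key recursive rerouting lemma for the B1 configuration. -/
lemma b1rec {n : ℕ} {Z : Set V} (hH : G.IsSigmaMAG) {w : G.Walk n} (hw : w.MOpen Z)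
    (j : ℕ) (hj2 : w.mk2 (j - 1) = Mark.tail) :
    ∀ (c l r : ℕ) (μ ν : Mark), l + (n - r) ≤ c → l < j → j < r → r ≤ n →
    G.EdgeMk (w.vert l) (w.vert r) μ ν →
    w.mk1 (r - 1) = Mark.tail → w.mk2 (r - 1) = Mark.tail →
    (AntWalk G (w.vert r) (w.vert (l + 1)) ∨ (w.mk1 l = Mark.tail ∧ w.mk2 l = Mark.tail)) →
    ∃ m, m < n ∧ ∃ w' : G.Walk m, w'.vert 0 = w.vert 0 ∧ w'.vert m = w.vert n ∧ w'.MOpen Z := by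
  intro c
  induction c using Nat.strong_induction_on with
  | _ c ih =>
    intro l r μ ν hc hlj hjr hrn he hrt1 hrt2 hant
    have hmk1r : r < n → w.mk1 r = Mark.tail := by
      intro hrn'
      have hforb := (hw.2.2 r (by omega) hrn').2
      rcases mark_cases (w.mk1 r) with h | h
      · exact h
      · exact absurd ⟨hrt1, hrt2, h⟩ hforb
    by_cases hB1 : ν = Mark.arrow ∧ r < n ∧ w.mk2 r = Mark.tail
    · -- recurse to the right
      obtain ⟨hν, hrn', hr2⟩ := hB1
      have hund : G.undir (w.vert r) (w.vert (r + 1)) := by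
        have hval := w.valid r hrn'
        rw [hmk1r hrn', hr2] at hval
        exact hval
      have harr : G.ArrowAt (w.vert r) (w.vert l) := by
        subst hν
        exact arrowAt_snd he
      obtain ⟨μ', ν', he'⟩ := edge_of_adj (hH.sigma_complete₁ _ _ _ harr hund)
      refine ih (l + (n - (r + 1))) (by omega) l (r + 1) μ' ν' (le_refl _) hlj (by omega)
        (by omega) he' (by simpa using hmk1r hrn') (by simpa using hr2) ?_
      rcases hant with h | h
      · exact Or.inl (antWalk_cons
          (show G.EdgeMk (w.vert (r + 1)) (w.vert r) Mark.tail Mark.tail from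
            G.undir_symm _ _ hund) h)
      · exact Or.inr h
    · by_cases hB2 : 0 < l ∧ μ = Mark.arrow ∧ w.mk1 (l - 1) = Mark.tail ∧
          w.mk2 (l - 1) = Mark.tail
      · -- recurse to the left (P3)
        obtain ⟨hl0, hμ, ha1, ha2⟩ := hB2
        have hund : G.undir (w.vert (l - 1)) (w.vert l) := by
          have hval := w.valid (l - 1) (by omega)
          have hidx : l - 1 + 1 = l := by omega
          rw [hidx, ha1, ha2] at hval
          exact hval
        have harr : G.ArrowAt (w.vert l) (w.vert r) := by
          subst hμ
          exact arrowAt_fst he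
        obtain ⟨μ', ν', he'⟩ :=
          edge_of_adj (adj_symm (hH.sigma_complete₁ _ _ _ harr (G.undir_symm _ _ hund)))
        exact ih ((l - 1) + (n - r)) (by omega) (l - 1) r μ' ν' (le_refl _) (by omega) hjr hrn
          he' hrt1 hrt2 (Or.inr ⟨ha1, ha2⟩)
      · by_cases hB3 : 0 < l ∧ μ = Mark.tail ∧ ν = Mark.tail ∧ w.mk2 (l - 1) = Mark.arrow
        · -- recurse to the left (P2)
          obtain ⟨hl0, hμ, hν, ha2⟩ := hB3
          have hundlr : G.undir (w.vert l) (w.vert r) := by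
            rw [hμ, hν] at he
            exact he
          have harr : G.ArrowAt (w.vert l) (w.vert (l - 1)) := by
            have hval := w.valid (l - 1) (by omega)
            have hidx : l - 1 + 1 = l := by omega
            rw [hidx, ha2] at hval
            exact arrowAt_snd hval
          obtain ⟨μ', ν', he'⟩ := edge_of_adj (hH.sigma_complete₁ _ _ _ harr hundlr)
          refine ih ((l - 1) + (n - r)) (by omega) (l - 1) r μ' ν' (le_refl _) (by omega) hjr hrn
            he' hrt1 hrt2 (Or.inl ?_)
          have hidx : l - 1 + 1 = l := by omega
          rw [hidx]
          exact antWalk_single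
            (show G.EdgeMk (w.vert r) (w.vert l) Mark.tail Mark.tail from G.undir_symm _ _ hundlr)
        · -- splice
          have hlr : l < r := by omega
          have hsv0 : ∀ k, k ≤ l → (spliceWalk w l r μ ν hlr hrn he).vert k = w.vert k := by
            intro k hk
            rw [splice_vert, if_pos hk]
          have hsv : ∀ k, l < k →
              (spliceWalk w l r μ ν hlr hrn he).vert k = w.vert (k + (r - l - 1)) := by
            intro k hk
            rw [splice_vert, if_neg (by omega)]
          have hsm1l : ∀ k, k < l → (spliceWalk w l r μ ν hlr hrn he).mk1 k = w.mk1 k := by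
            intro k hk
            rw [splice_mk1, if_pos hk]
          have hsm2l : ∀ k, k < l → (spliceWalk w l r μ ν hlr hrn he).mk2 k = w.mk2 k := by
            intro k hk
            rw [splice_mk2, if_pos hk]
          have hsm1e : (spliceWalk w l r μ ν hlr hrn he).mk1 l = μ := by
            rw [splice_mk1, if_neg (lt_irrefl l), if_pos rfl]
          have hsm2e : (spliceWalk w l r μ ν hlr hrn he).mk2 l = ν := by
            rw [splice_mk2, if_neg (lt_irrefl l), if_pos rfl]
          have hsm1g : ∀ k, l < k →
              (spliceWalk w l r μ ν hlr hrn he).mk1 k = w.mk1 (k + (r - l - 1)) := by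
            intro k hk
            rw [splice_mk1, if_neg (by omega), if_neg (by omega)]
          have hsm2g : ∀ k, l < k →
              (spliceWalk w l r μ ν hlr hrn he).mk2 k = w.mk2 (k + (r - l - 1)) := by
            intro k hk
            rw [splice_mk2, if_neg (by omega), if_neg (by omega)]
          have hcoll_lt : ∀ k, k < l →
              ((spliceWalk w l r μ ν hlr hrn he).IsCollider k ↔ w.IsCollider k) := by
            intro k hk
            constructor
            · rintro ⟨a1, a2, a3, a4⟩
              rw [hsm2l (k - 1) (by omega)] at a3
              rw [hsm1l k hk] at a4
              exact ⟨a1, by omega, a3, a4⟩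
            · rintro ⟨a1, a2, a3, a4⟩
              refine ⟨a1, by omega, ?_, ?_⟩
              · rw [hsm2l (k - 1) (by omega)]
                exact a3
              · rw [hsm1l k hk]
                exact a4
          have hcoll_gt : ∀ k, l + 2 ≤ k →
              ((spliceWalk w l r μ ν hlr hrn he).IsCollider k ↔
                w.IsCollider (k + (r - l - 1))) := by
            intro k hk
            have hidx : k - 1 + (r - l - 1) = k + (r - l - 1) - 1 := by omega
            constructor
            · rintro ⟨a1, a2, a3, a4⟩
              rw [hsm2g (k - 1) (by omega), hidx] at a3
              rw [hsm1g k (by omega)] at a4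
              exact ⟨by omega, by omega, a3, a4⟩
            · rintro ⟨a1, a2, a3, a4⟩
              refine ⟨by omega, by omega, ?_, ?_⟩
              · rw [hsm2g (k - 1) (by omega), hidx]
                exact a3
              · rw [hsm1g k (by omega)]
                exact a4
          refine ⟨l + 1 + (n - r), by omega, spliceWalk w l r μ ν hlr hrn he,
            hsv0 0 (Nat.zero_le l), splice_vert_last w μ ν hlr hrn he, ?_, ?_, ?_⟩
          · -- non-colliders are outside Z
            intro k hk hnc
            by_cases hkl : k < l
            · rw [hsv0 k (by omega)]
              refine hw.1 k (by omega) ?_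
              intro hcol
              exact hnc ((hcoll_lt k hkl).mpr hcol)
            · by_cases hke : k = l
              · subst hke
                rw [hsv0 k (le_refl k)]
                by_cases hl0 : 0 < k
                · by_cases hcl : w.IsCollider k
                  · exfalso
                    have hμ : μ = Mark.tail := by
                      rcases mark_cases μ with h | h
                      · exact h
                      · refine absurd ?_ hnc
                        refine ⟨hl0, by omega, ?_, ?_⟩
                        · rw [hsm2l (k - 1) (by omega)]
                          exact hcl.2.2.1
                        · rw [hsm1e]
                          exact h
                    rcases mark_cases ν with hν | hν
                    · exact hB3 ⟨hl0, hμ, hν, hcl.2.2.1⟩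
                    · have hant2 : AntWalk G (w.vert r) (w.vert (k + 1)) := by
                        rcases hant with h | h
                        · exact h
                        · exact absurd hcl.2.2.2 (by rw [h.1]; simp)
                      have hantw : AntWalk G (w.vert k) (w.vert (k + 1)) :=
                        antWalk_cons (show G.EdgeMk (w.vert k) (w.vert r) Mark.tail Mark.arrow
                          from by rw [hμ, hν] at he; exact he) hant2
                      have hna := hH.ancestral _ _ (antWalk_anterior hantw)
                      have hval := w.valid k (by omega)
                      rw [hcl.2.2.2] at hval
                      exact hna (arrowAt_fst hval)
                  · exact hw.1 k (by omega) hcl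
                · have hk0 : k = 0 := by omega
                  subst hk0
                  refine hw.1 0 (by omega) ?_
                  intro hcol
                  exact absurd hcol.1 (by omega)
              · have hkgt : l < k := by omega
                rw [hsv k hkgt]
                refine hw.1 (k + (r - l - 1)) (by omega) ?_
                intro hcol
                by_cases hk1 : k = l + 1
                · have hkd : k + (r - l - 1) = r := by omega
                  rw [hkd] at hcol
                  exact absurd hcol.2.2.1 (by rw [hrt2]; simp)
                · exact hnc ((hcoll_gt k (by omega)).mpr hcol)
          · -- colliders are ancestors of Z
            intro k hcol
            have hk0 : 0 < k := hcol.1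
            have hkm : k < l + 1 + (n - r) := hcol.2.1
            by_cases hkl : k < l
            · rw [hsv0 k (by omega)]
              exact hw.2.1 k ((hcoll_lt k hkl).mp hcol)
            · by_cases hke : k = l
              · subst hke
                rw [hsv0 k (le_refl k)]
                have ha2 : w.mk2 (k - 1) = Mark.arrow := by
                  have h3 := hcol.2.2.1
                  rwa [hsm2l (k - 1) (by omega)] at h3
                by_cases hcl : w.IsCollider k
                · exact hw.2.1 k hcl
                · have hm1 : w.mk1 k = Mark.tail := by
                    rcases mark_cases (w.mk1 k) with h | h
                    · exact h
                    · exact absurd ⟨hk0, by omega, ha2, h⟩ hcl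
                  have hm2 : w.mk2 k = Mark.arrow := by
                    rcases mark_cases (w.mk2 k) with h | h
                    · exact absurd ⟨ha2, hm1, h⟩ (hw.2.2 k hk0 (by omega)).1
                    · exact h
                  have hanc := push_ancS hw hm2 (show k < j by omega) (by omega) hj2
                  have hval := w.valid k (by omega)
                  rw [hm1, hm2] at hval
                  exact ancS_head hval hanc
              · have hkgt : l < k := by omega
                rw [hsv k hkgt]
                by_cases hk1 : k = l + 1
                · exfalso
                  have h1 := hcol.2.2.2
                  rw [hsm1g k hkgt] at h1
                  have hkd : k + (r - l - 1) = r := by omega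
                  rw [hkd] at h1
                  have hrn' : r < n := by omega
                  rw [hmk1r hrn'] at h1
                  cases h1
                · exact hw.2.1 (k + (r - l - 1)) ((hcoll_gt k (by omega)).mp hcol)
          · -- no blocked configurations
            intro k hk0 hkm
            by_cases hkl : k < l
            · have h := hw.2.2 k hk0 (by omega)
              constructor
              · rintro ⟨h1, h2, h3⟩
                rw [hsm2l (k - 1) (by omega)] at h1
                rw [hsm1l k hkl] at h2
                rw [hsm2l k hkl] at h3
                exact h.1 ⟨h1, h2, h3⟩
              · rintro ⟨h1, h2, h3⟩
                rw [hsm1l (k - 1) (by omega)] at h1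
                rw [hsm2l (k - 1) (by omega)] at h2
                rw [hsm1l k hkl] at h3
                exact h.2 ⟨h1, h2, h3⟩
            · by_cases hke : k = l
              · subst hke
                constructor
                · rintro ⟨h1, h2, h3⟩
                  rw [hsm2l (k - 1) (by omega)] at h1
                  rw [hsm1e] at h2
                  rw [hsm2e] at h3
                  exact hB3 ⟨hk0, h2, h3, h1⟩
                · rintro ⟨h1, h2, h3⟩
                  rw [hsm1l (k - 1) (by omega)] at h1
                  rw [hsm2l (k - 1) (by omega)] at h2
                  rw [hsm1e] at h3
                  exact hB2 ⟨hk0, h3, h1, h2⟩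
              · have hkgt : l < k := by omega
                by_cases hk1 : k = l + 1
                · subst hk1
                  have hrn' : r < n := by omega
                  have hkd : l + 1 + (r - l - 1) = r := by omega
                  constructor
                  · rintro ⟨h1, h2, h3⟩
                    simp only [Nat.add_sub_cancel] at h1
                    rw [hsm2e] at h1
                    rw [hsm1g (l + 1) (by omega), hkd] at h2
                    rw [hsm2g (l + 1) (by omega), hkd] at h3
                    exact hB1 ⟨h1, hrn', h3⟩
                  · rintro ⟨h1, h2, h3⟩
                    rw [hsm1g (l + 1) (by omega), hkd] at h3
                    rw [hmk1r hrn'] at h3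
                    cases h3
                · have h := hw.2.2 (k + (r - l - 1)) (by omega) (by omega)
                  have hidx : k - 1 + (r - l - 1) = k + (r - l - 1) - 1 := by omega
                  constructor
                  · rintro ⟨h1, h2, h3⟩
                    rw [hsm2g (k - 1) (by omega), hidx] at h1
                    rw [hsm1g k hkgt] at h2
                    rw [hsm2g k hkgt] at h3
                    exact h.1 ⟨h1, h2, h3⟩
                  · rintro ⟨h1, h2, h3⟩
                    rw [hsm1g (k - 1) (by omega), hidx] at h1
                    rw [hsm2g (k - 1) (by omega), hidx] at h2
                    rw [hsm1g k hkgt] at h3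
                    exact h.2 ⟨h1, h2, h3⟩

end MOpenProof
namespace MOpenProof

variable {V : Type*} {G : MixedGraph V}

lemma b1main {n : ℕ} {Z : Set V} (hH : G.IsSigmaMAG) {w : G.Walk n} (hw : w.MOpen Z)
    {i j : ℕ} (hi0 : 0 < i) (hij : i < j) (hjn : j < n) (hv : w.vert i = w.vert j)
    (ha : w.mk2 (i - 1) = Mark.arrow) (hu1 : w.mk1 j = Mark.tail) (hu2 : w.mk2 j = Mark.tail) :
    ∃ m, m < n ∧ ∃ w' : G.Walk m, w'.vert 0 = w.vert 0 ∧ w'.vert m = w.vert n ∧ w'.MOpen Z := by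
  have hj2 : w.mk2 (j - 1) = Mark.tail := by
    have hforb := (hw.2.2 j (by omega) hjn).1
    rcases mark_cases (w.mk2 (j - 1)) with h | h
    · exact h
    · exact absurd ⟨h, hu1, hu2⟩ hforb
  have hundj : G.undir (w.vert i) (w.vert (j + 1)) := by
    have hval := w.valid j hjn
    rw [hu1, hu2] at hval
    rw [hv]
    exact hval
  have harri : G.ArrowAt (w.vert i) (w.vert (i - 1)) := by
    have hval := w.valid (i - 1) (by omega)
    have hidx : i - 1 + 1 = i := by omega
    rw [hidx, ha] at hval
    exact arrowAt_snd hval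
  obtain ⟨μ, ν, he⟩ := edge_of_adj (hH.sigma_complete₁ _ _ _ harri hundj)
  refine b1rec hH hw j hj2 ((i - 1) + (n - (j + 1))) (i - 1) (j + 1) μ ν (le_refl _)
    (by omega) (by omega) (by omega) he (by simpa using hu1) (by simpa using hu2) (Or.inl ?_)
  have hidx : i - 1 + 1 = i := by omega
  rw [hidx]
  exact antWalk_single (show G.EdgeMk (w.vert (j + 1)) (w.vert i) Mark.tail Mark.tail from
    G.undir_symm _ _ hundj)

lemma shorter {n : ℕ} {Z : Set V} (hH : G.IsSigmaMAG) {w : G.Walk n} (hw : w.MOpen Z)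
    {i j : ℕ} (hij : i < j) (hjn : j ≤ n) (hv : w.vert i = w.vert j) :
    ∃ m, m < n ∧ ∃ w' : G.Walk m, w'.vert 0 = w.vert 0 ∧ w'.vert m = w.vert n ∧ w'.MOpen Z := by
  by_cases hB1 : 0 < i ∧ j < n ∧ w.mk2 (i - 1) = Mark.arrow ∧ w.mk1 j = Mark.tail ∧
      w.mk2 j = Mark.tail
  · exact b1main hH hw hB1.1 hij hB1.2.1 hv hB1.2.2.1 hB1.2.2.2.1 hB1.2.2.2.2
  · by_cases hB2 : 0 < i ∧ j < n ∧ w.mk1 (i - 1) = Mark.tail ∧ w.mk2 (i - 1) = Mark.tail ∧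
        w.mk1 j = Mark.arrow
    · obtain ⟨hi0, hjn', h1, h2, h3⟩ := hB2
      have hrw := reverse_mopen hw
      have hhv : w.reverse.vert (n - j) = w.reverse.vert (n - i) := by
        rw [reverse_vert, reverse_vert]
        have e1 : n - (n - j) = j := by omega
        have e2 : n - (n - i) = i := by omega
        rw [e1, e2]
        exact hv.symm
      have hha : w.reverse.mk2 (n - j - 1) = Mark.arrow := by
        rw [reverse_mk2]
        have e : n - 1 - (n - j - 1) = j := by omega
        rw [e]
        exact h3
      have hhu1 : w.reverse.mk1 (n - i) = Mark.tail := by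
        rw [reverse_mk1]
        have e : n - 1 - (n - i) = i - 1 := by omega
        rw [e]
        exact h2
      have hhu2 : w.reverse.mk2 (n - i) = Mark.tail := by
        rw [reverse_mk2]
        have e : n - 1 - (n - i) = i - 1 := by omega
        rw [e]
        exact h1
      obtain ⟨m, hm, w2, h20, h2m, h2o⟩ :=
        b1main hH hrw (show 0 < n - j by omega) (show n - j < n - i by omega)
          (show n - i < n by omega) hhv hha hhu1 hhu2
      refine ⟨m, hm, w2.reverse, ?_, ?_, reverse_mopen h2o⟩
      · rw [reverse_vert]
        have e : m - 0 = m := by omega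
        rw [e, h2m, reverse_vert]
        have e2 : n - n = 0 := by omega
        rw [e2]
      · rw [reverse_vert]
        have e : m - m = 0 := by omega
        rw [e, h20, reverse_vert]
        have e2 : n - 0 = n := by omega
        rw [e2]
    · -- plain splice of the loop
      have hle : i ≤ j := le_of_lt hij
      have hji : i + (j - i) = j := by omega
      have hdv0 : ∀ k, k ≤ i → (dropWalk w i j hle hjn hv).vert k = w.vert k := by
        intro k hk
        rw [drop_vert, if_pos hk]
      have hdv : ∀ k, i < k → (dropWalk w i j hle hjn hv).vert k = w.vert (k + (j - i)) := by
        intro k hk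
        rw [drop_vert, if_neg (by omega)]
      have hdm1l : ∀ k, k < i → (dropWalk w i j hle hjn hv).mk1 k = w.mk1 k := by
        intro k hk
        rw [drop_mk1, if_pos hk]
      have hdm2l : ∀ k, k < i → (dropWalk w i j hle hjn hv).mk2 k = w.mk2 k := by
        intro k hk
        rw [drop_mk2, if_pos hk]
      have hdm1g : ∀ k, i ≤ k → (dropWalk w i j hle hjn hv).mk1 k = w.mk1 (k + (j - i)) := by
        intro k hk
        rw [drop_mk1, if_neg (by omega)]
      have hdm2g : ∀ k, i ≤ k → (dropWalk w i j hle hjn hv).mk2 k = w.mk2 (k + (j - i)) := by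
        intro k hk
        rw [drop_mk2, if_neg (by omega)]
      have hcoll_lt : ∀ k, k < i →
          ((dropWalk w i j hle hjn hv).IsCollider k ↔ w.IsCollider k) := by
        intro k hk
        constructor
        · rintro ⟨a1, a2, a3, a4⟩
          rw [hdm2l (k - 1) (by omega)] at a3
          rw [hdm1l k hk] at a4
          exact ⟨a1, by omega, a3, a4⟩
        · rintro ⟨a1, a2, a3, a4⟩
          refine ⟨a1, by omega, ?_, ?_⟩
          · rw [hdm2l (k - 1) (by omega)]
            exact a3
          · rw [hdm1l k hk]
            exact a4
      have hcoll_gt : ∀ k, i < k →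
          ((dropWalk w i j hle hjn hv).IsCollider k ↔ w.IsCollider (k + (j - i))) := by
        intro k hk
        have hidx : k - 1 + (j - i) = k + (j - i) - 1 := by omega
        constructor
        · rintro ⟨a1, a2, a3, a4⟩
          rw [hdm2g (k - 1) (by omega), hidx] at a3
          rw [hdm1g k (by omega)] at a4
          exact ⟨by omega, by omega, a3, a4⟩
        · rintro ⟨a1, a2, a3, a4⟩
          refine ⟨by omega, by omega, ?_, ?_⟩
          · rw [hdm2g (k - 1) (by omega), hidx]
            exact a3
          · rw [hdm1g k (by omega)]
            exact a4
      refine ⟨n - (j - i), by omega, dropWalk w i j hle hjn hv, hdv0 0 (Nat.zero_le i),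
        drop_vert_last w hle hjn hv, ?_, ?_, ?_⟩
      · -- non-colliders are outside Z
        intro k hk hnc
        by_cases hkl : k < i
        · rw [hdv0 k (by omega)]
          refine hw.1 k (by omega) ?_
          intro hcol
          exact hnc ((hcoll_lt k hkl).mpr hcol)
        · by_cases hke : k = i
          · subst hke
            rw [hdv0 k (le_refl k)]
            by_cases hcl : w.IsCollider k
            · have hk0' : 0 < k := hcl.1
              by_cases hkm : k < n - (j - k)
              · have hmj : w.mk1 j = Mark.tail := by
                  rcases mark_cases (w.mk1 j) with h | h
                  · exact h
                  · exfalso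
                    refine hnc ⟨hcl.1, hkm, ?_, ?_⟩
                    · rw [hdm2l (k - 1) (by omega)]
                      exact hcl.2.2.1
                    · rw [hdm1g k (le_refl k), hji]
                      exact h
                rw [hv]
                refine hw.1 j (by omega) ?_
                intro hcol
                exact absurd hcol.2.2.2 (by rw [hmj]; simp)
              · rw [hv]
                have hjn'' : j = n := by omega
                refine hw.1 j (by omega) ?_
                intro hcol
                exact absurd hcol.2.1 (by omega)
            · exact hw.1 k (by omega) hcl
          · have hkgt : i < k := by omega
            rw [hdv k hkgt]
            refine hw.1 (k + (j - i)) (by omega) ?_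
            intro hcol
            exact hnc ((hcoll_gt k hkgt).mpr hcol)
      · -- colliders are ancestors of Z
        intro k hcol
        have hk0 : 0 < k := hcol.1
        have hkm : k < n - (j - i) := hcol.2.1
        by_cases hkl : k < i
        · rw [hdv0 k (by omega)]
          exact hw.2.1 k ((hcoll_lt k hkl).mp hcol)
        · by_cases hke : k = i
          · subst hke
            have hjn' : j < n := by omega
            have ha2 : w.mk2 (k - 1) = Mark.arrow := by
              have h3 := hcol.2.2.1
              rwa [hdm2l (k - 1) (by omega)] at h3
            have haj : w.mk1 j = Mark.arrow := by
              have h4 := hcol.2.2.2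
              rwa [hdm1g k (le_refl k), hji] at h4
            rw [hdv0 k (le_refl k)]
            by_cases hcl : w.IsCollider k
            · exact hw.2.1 k hcl
            · have hm1 : w.mk1 k = Mark.tail := by
                rcases mark_cases (w.mk1 k) with h | h
                · exact h
                · exact absurd ⟨hk0, by omega, ha2, h⟩ hcl
              have hm2 : w.mk2 k = Mark.arrow := by
                rcases mark_cases (w.mk2 k) with h | h
                · exact absurd ⟨ha2, hm1, h⟩ (hw.2.2 k hk0 (by omega)).1
                · exact h
              by_cases hclj : w.IsCollider j
              · rw [hv]
                exact hw.2.1 j hclj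
              · have hj2 : w.mk2 (j - 1) = Mark.tail := by
                  rcases mark_cases (w.mk2 (j - 1)) with h | h
                  · exact h
                  · exact absurd ⟨by omega, hjn', h, haj⟩ hclj
                have hanc := push_ancS hw hm2 hij (by omega) hj2
                have hval := w.valid k (by omega)
                rw [hm1, hm2] at hval
                exact ancS_head hval hanc
          · have hkgt : i < k := by omega
            rw [hdv k hkgt]
            exact hw.2.1 (k + (j - i)) ((hcoll_gt k hkgt).mp hcol)
      · -- no blocked configurations
        intro k hk0 hkm
        by_cases hkl : k < i
        · have h := hw.2.2 k hk0 (by omega)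
          constructor
          · rintro ⟨h1, h2, h3⟩
            rw [hdm2l (k - 1) (by omega)] at h1
            rw [hdm1l k hkl] at h2
            rw [hdm2l k hkl] at h3
            exact h.1 ⟨h1, h2, h3⟩
          · rintro ⟨h1, h2, h3⟩
            rw [hdm1l (k - 1) (by omega)] at h1
            rw [hdm2l (k - 1) (by omega)] at h2
            rw [hdm1l k hkl] at h3
            exact h.2 ⟨h1, h2, h3⟩
        · by_cases hke : k = i
          · subst hke
            have hjn' : j < n := by omega
            constructor
            · rintro ⟨h1, h2, h3⟩
              rw [hdm2l (k - 1) (by omega)] at h1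
              rw [hdm1g k (le_refl k), hji] at h2
              rw [hdm2g k (le_refl k), hji] at h3
              exact hB1 ⟨hk0, hjn', h1, h2, h3⟩
            · rintro ⟨h1, h2, h3⟩
              rw [hdm1l (k - 1) (by omega)] at h1
              rw [hdm2l (k - 1) (by omega)] at h2
              rw [hdm1g k (le_refl k), hji] at h3
              exact hB2 ⟨hk0, hjn', h1, h2, h3⟩
          · have hkgt : i < k := by omega
            have h := hw.2.2 (k + (j - i)) (by omega) (by omega)
            have hidx : k - 1 + (j - i) = k + (j - i) - 1 := by omega
            constructor
            · rintro ⟨h1, h2, h3⟩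
              rw [hdm2g (k - 1) (by omega), hidx] at h1
              rw [hdm1g k (by omega)] at h2
              rw [hdm2g k (by omega)] at h3
              exact h.1 ⟨h1, h2, h3⟩
            · rintro ⟨h1, h2, h3⟩
              rw [hdm1g (k - 1) (by omega), hidx] at h1
              rw [hdm2g (k - 1) (by omega), hidx] at h2
              rw [hdm1g k (by omega)] at h3
              exact h.2 ⟨h1, h2, h3⟩

lemma mopen_to_path {Z : Set V} (hH : G.IsSigmaMAG) :
    ∀ (N : ℕ) (w : G.Walk N), w.MOpen Z →
    ∃ (m : ℕ) (w' : G.Walk m), w'.IsPath ∧ w'.vert 0 = w.vert 0 ∧ w'.vert m = w.vert N ∧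
      w'.MOpen Z := by
  intro N
  induction N using Nat.strong_induction_on with
  | _ N ih =>
    intro w hw
    by_cases hp : w.IsPath
    · exact ⟨N, w, hp, rfl, rfl, hw⟩
    · unfold MixedGraph.Walk.IsPath at hp
      push_neg at hp
      obtain ⟨a', b', ha', hb', hvv, hne⟩ := hp
      have key : ∃ m, m < N ∧ ∃ w2 : G.Walk m, w2.vert 0 = w.vert 0 ∧ w2.vert m = w.vert N ∧
          w2.MOpen Z := by
        rcases lt_or_gt_of_ne hne with h | h
        · exact shorter hH hw h hb' hvv
        · exact shorter hH hw h ha' hvv.symm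
      obtain ⟨m, hm, w2, e0, em, hw2⟩ := key
      obtain ⟨m', w3, hp3, e0', em', hw3⟩ := ih m hm w2 hw2
      exact ⟨m', w3, hp3, e0'.trans e0, em'.trans em, hw3⟩

end MOpenProof

/-- In a σ-MAG, there is a `Z`-m-open walk between `a` and `b` if and only if there is
a `Z`-m-open path between `a` and `b`. -/
theorem mOpen_walk_iff_mOpen_path {V : Type*} (H : MixedGraph V) (hH : H.IsSigmaMAG)
    (Z : Set V) (a b : V) :
    (∃ (n : ℕ) (w : H.Walk n), w.vert 0 = a ∧ w.vert n = b ∧ w.MOpen Z) ↔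
    (∃ (n : ℕ) (w : H.Walk n), w.IsPath ∧ w.vert 0 = a ∧ w.vert n = b ∧ w.MOpen Z) := by
  constructor
  · rintro ⟨n, w, h0, hn, hw⟩
    obtain ⟨m, w', hp, e0, em, hw'⟩ := MOpenProof.mopen_to_path hH n w hw
    exact ⟨m, w', hp, e0.trans h0, em.trans hn, hw'⟩
  · rintro ⟨n, w, -, h0, hn, hw⟩
    exact ⟨n, w, h0, hn, hw⟩
end
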